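/- arXiv:2109.06140 — 6 statements merged into one kernel-verified Lean document; each statement's English description precedes it below -/
import Mathlib

section
/- For every L_{∞,ω}-formula φ(x_0,…,x_{n-1}), every L-structure M, every sharp back-and-forth system F on M with flattening B, and every ā ∈ M^n: M ⊨ φ(ā) if and only if B ⊨ φ♭(ā/E_n). -/
open FirstOrder FirstOrder.Language

open FirstOrder FirstOrder.Language

/-- A (finitary) back-and-forth system on an `L`-structure `M`. -/
def IsBFSystem (L : FirstOrder.Language) (M : Type*) [L.Structure M]
    (F : ∀ n : ℕ, Set ((Fin n → M) × (Fin n → M))) : Prop :=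
  (∃ n p, p ∈ F n) ∧
  (∀ n, ∀ p ∈ F n, ∀ φ : L.Formula (Fin n), φ.IsAtomic →
      (φ.Realize p.1 ↔ φ.Realize p.2)) ∧
  (∀ n, ∀ p ∈ F n, ∀ c : M, ∃ d : M,
      (Fin.snoc p.1 c, Fin.snoc p.2 d) ∈ F (n + 1)) ∧
  (∀ n, ∀ p ∈ F n, ∀ d : M, ∃ c : M,
      (Fin.snoc p.1 c, Fin.snoc p.2 d) ∈ F (n + 1))

/-- `F` is closed under injective subsequence maps. -/
def DownwardClosed (M : Type*) (F : ∀ n : ℕ, Set ((Fin n → M) × (Fin n → M))) : Prop :=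
  ∀ (k n : ℕ) (f : Fin k → Fin n), Function.Injective f →
    ∀ p ∈ F n, (p.1 ∘ f, p.2 ∘ f) ∈ F k

/-- A sharp back-and-forth system: downward closed, and an equivalence relation at each level. -/
def IsSharpBF (L : FirstOrder.Language) (M : Type*) [L.Structure M]
    (F : ∀ n : ℕ, Set ((Fin n → M) × (Fin n → M))) : Prop :=
  IsBFSystem L M F ∧ DownwardClosed M F ∧
    ∀ k : ℕ, Equivalence (fun a b : Fin k → M => (a, b) ∈ F k)


/-- Infinitary `L_{∞,ω}`-formulas (with set-sized conjunctions) in the free variables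
`x_0, …, x_{n-1}`, built from quantifier-free first-order formulas. -/
inductive InfForm (L : FirstOrder.Language) : ℕ → Type _
  | base {n : ℕ} (φ : L.Formula (Fin n)) (hφ : φ.IsQF) : InfForm L n
  | conj {n : ℕ} (ι : Type) (f : ι → InfForm L n) : InfForm L n
  | not {n : ℕ} (φ : InfForm L n) : InfForm L n
  | ex {n : ℕ} (φ : InfForm L (n + 1)) : InfForm L n

/-- Satisfaction of infinitary formulas in an `L`-structure. -/
def InfForm.Realize {L : FirstOrder.Language} {M : Type*} [L.Structure M] :
    ∀ {n : ℕ}, InfForm L n → (Fin n → M) → Prop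
  | _, .base φ _, v => φ.Realize v
  | _, .conj _ f, v => ∀ i, (f i).Realize v
  | _, .not φ, v => ¬ φ.Realize v
  | _, .ex φ, v => ∃ c, φ.Realize (Fin.snoc v c)

/-- Satisfaction of the flattened formula `φ♭` in the flattening of `(M,F)`, whose `n`-th sort
is the quotient of `M^n` by `E_n = F ∩ M^{2n}`.  The clauses follow the recursive definition of
the map `φ ↦ φ♭`: quantifier-free formulas become the distinguished predicates, the translation
commutes with conjunction and negation, and
`(∃y θ)♭(z) = ∃w (U_{n+1}(w) ∧ θ♭(w) ∧ P^{id}_{n,n+1}(w) = z)`. -/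
def FlatRealize {L : FirstOrder.Language} {M : Type*} [L.Structure M]
    (F : ∀ n : ℕ, Set ((Fin n → M) × (Fin n → M))) :
    ∀ {n : ℕ}, InfForm L n → Quot (fun a b : Fin n → M => (a, b) ∈ F n) → Prop
  | _, .base φ _, b => ∃ a, Quot.mk _ a = b ∧ φ.Realize a
  | _, .conj _ f, b => ∀ i, FlatRealize F (f i) b
  | _, .not φ, b => ¬ FlatRealize F φ b
  | n, .ex φ, b => ∃ c : Quot (fun a a' : Fin (n + 1) → M => (a, a') ∈ F (n + 1)),
      FlatRealize F φ c ∧ ∃ a : Fin (n + 1) → M, Quot.mk _ a = c ∧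
        Quot.mk _ (a ∘ Fin.castSucc) = b


private lemma qf_pres {L : FirstOrder.Language} {M : Type*} [L.Structure M]
    {F : ∀ n : ℕ, Set ((Fin n → M) × (Fin n → M))} (hF : IsSharpBF L M F)
    {k : ℕ} {p q : Fin k → M} (h : (p, q) ∈ F k)
    {φ : L.Formula (Fin k)} (hφ : φ.IsQF) : φ.Realize p ↔ φ.Realize q := by
  induction hφ with
  | falsum => rfl
  | of_isAtomic h' => exact hF.1.2.1 k (p, q) h _ h'
  | imp _ _ ih1 ih2 =>
    show (_ → _) ↔ (_ → _)
    exact imp_congr ih1 ih2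

private lemma quot_eq_iff {L : FirstOrder.Language} {M : Type*} [L.Structure M]
    {F : ∀ n : ℕ, Set ((Fin n → M) × (Fin n → M))} (hF : IsSharpBF L M F)
    {k : ℕ} {p q : Fin k → M} :
    Quot.mk (fun a b : Fin k → M => (a, b) ∈ F k) p = Quot.mk _ q ↔ (p, q) ∈ F k := by
  constructor
  · intro h
    have := Quot.eq.mp h
    rwa [(hF.2.2 k).eqvGen_iff] at this
  · exact fun h => Quot.sound h

/-- For every `L_{∞,ω}`-formula `φ(x_0,…,x_{n-1})`, every `L`-structure `M`, every sharp
back-and-forth system `F` on `M` with flattening `B`, and every `ā ∈ M^n`: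
`M ⊨ φ(ā)` iff `B ⊨ φ♭(ā/E_n)`. -/
theorem stmt3 {L : FirstOrder.Language} {M : Type*} [L.Structure M]
    (F : ∀ n : ℕ, Set ((Fin n → M) × (Fin n → M))) (hF : IsSharpBF L M F)
    {n : ℕ} (φ : InfForm L n) (a : Fin n → M) :
    φ.Realize a ↔ FlatRealize F φ (Quot.mk _ a) := by
  induction φ with
  | base φ hφ =>
    constructor
    · intro h; exact ⟨a, rfl, h⟩
    · rintro ⟨a', ha', h⟩
      exact (qf_pres hF ((quot_eq_iff hF).mp ha') hφ).mp h
  | conj ι f ih =>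
    exact forall_congr' fun i => ih i a
  | not φ ih =>
    exact not_congr (ih a)
  | @ex m φ ih =>
    constructor
    · rintro ⟨c, hc⟩
      refine ⟨Quot.mk _ (Fin.snoc a c), (ih _).mp hc, Fin.snoc a c, rfl, ?_⟩
      congr 1
      funext i
      simp
    · rintro ⟨c', hc', a', rfl, hcast⟩
      have hrel : (a' ∘ Fin.castSucc, a) ∈ F m := (quot_eq_iff hF).mp hcast
      obtain ⟨d, hd⟩ := hF.1.2.2.1 m (a' ∘ Fin.castSucc, a) hrel (a' (Fin.last m))
      have ha'eq : Fin.snoc (a' ∘ Fin.castSucc) (a' (Fin.last m)) = a' := by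
        funext i
        refine Fin.lastCases ?_ ?_ i <;> simp
      rw [ha'eq] at hd
      refine ⟨d, (ih _).mpr ?_⟩
      rwa [← (quot_eq_iff hF).mpr hd]
end

section
/- In any flat structure B, for any function f* : n → m (not necessarily injective) and any a ∈ U_m, there is a unique c ∈ U_{m+n} such that a ≤ c and the formula ⋀_{i<n} x_{f*(i)} = x_{m+i} belongs to Δ_c. -/
open FirstOrder FirstOrder.Language

/-- The inclusion `Fin k → Fin (k + p)` is injective. -/
lemma castAdd_inj (k p : ℕ) : Function.Injective (Fin.castAdd p : Fin k → Fin (k + p)) :=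
  fun a b hab => Fin.ext (by simpa using congrArg Fin.val hab)

/-- The shift `Fin n → Fin (m + n)`, `i ↦ m + i`, is injective. -/
lemma natAdd_inj (m n : ℕ) : Function.Injective (Fin.natAdd m : Fin n → Fin (m + n)) :=
  fun a b hab => Fin.ext (by
    have := congrArg Fin.val hab
    simp only [Fin.coe_natAdd] at this
    omega)

/-- The map `v : Fin (k+q) → Fin (k+p+q)` with `v i = i` for `i < k` and `v i = p + i`
otherwise (i.e. `v (k + j) = (k + p) + j`), used in the Amalgamation axiom. -/
def amalgMap (k p q : ℕ) : Fin (k + q) → Fin (k + p + q) := fun i =>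
  if _ : (i : ℕ) < k then ⟨i, by omega⟩ else ⟨(i : ℕ) + p, by omega⟩

lemma amalgMap_inj (k p q : ℕ) : Function.Injective (amalgMap k p q) := by
  intro a b hab
  have ha := a.2
  have hb := b.2
  unfold amalgMap at hab
  apply Fin.ext
  split_ifs at hab <;> (have := congrArg Fin.val hab; simp only at this; omega)

/-- Any map out of `Fin 1` is injective. -/
lemma fin1_inj (f : Fin 1 → Fin 2) : Function.Injective f :=
  fun a b _ => Subsingleton.elim a b

/-- A flat structure: a model of the axioms `Ax♭(L)`.  The sorts `U n` (which partition the
universe), the unary projections `P^f` for injective `f : Fin k → Fin n`, and the family of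
unary predicates `α♭` for quantifier-free `α` (recorded via `Sat`, so that
`Δ_a = {α quantifier-free : Sat α a}`), subject to the structural, relational, equality,
amalgamation, duplication, constant and function axioms. -/
structure FlatStructure (L : FirstOrder.Language) where
  U : ℕ → Type
  P : ∀ {k n : ℕ} (f : Fin k → Fin n), Function.Injective f → U n → U k
  Sat : ∀ {n : ℕ}, L.Formula (Fin n) → U n → Prop
  /-- Structural axiom: `P^{id}` is the identity. -/
  P_id : ∀ {n : ℕ} (a : U n), P id Function.injective_id a = a
  /-- Structural axiom: `Δ_a` is a realized (hence consistent) quantifier-free type. -/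
  delta_realized : ∀ {n : ℕ} (a : U n), ∃ (N : Type) (_ : L.Structure N) (v : Fin n → N),
    ∀ β : L.Formula (Fin n), β.IsQF → Sat β a → β.Realize v
  /-- Structural axiom: `Δ_a` is complete: exactly one of `β`, `¬β` belongs to it. -/
  delta_complete : ∀ {n : ℕ} (a : U n) (β : L.Formula (Fin n)), β.IsQF →
    (Sat β.not a ↔ ¬ Sat β a)
  /-- Relational axiom: compositionality of the projections. -/
  P_comp : ∀ {k n m : ℕ} (f : Fin k → Fin n) (g : Fin n → Fin m)
    (hf : Function.Injective f) (hg : Function.Injective g)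
    (hgf : Function.Injective (g ∘ f)) (a : U m),
    P (g ∘ f) hgf a = P f hf (P g hg a)
  /-- Relational axiom: `α ∈ Δ_{P^f(a)}` iff `α(x_{f(0)},…,x_{f(k-1)}) ∈ Δ_a`. -/
  P_sat : ∀ {k n : ℕ} (f : Fin k → Fin n) (hf : Function.Injective f) (a : U n)
    (α : L.Formula (Fin k)), α.IsQF → (Sat α (P f hf a) ↔ Sat (α.relabel f) a)
  /-- Equality axiom. -/
  eq_axiom : ∀ {k n : ℕ} (f g : Fin k → Fin n) (hf : Function.Injective f)
    (hg : Function.Injective g) (a : U n),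
    (∀ i, Sat (Term.equal (Term.var (f i)) (Term.var (g i))) a) → P f hf a = P g hg a
  /-- Amalgamation axiom. -/
  amalg : ∀ {k p q : ℕ} (a : U k) (b : U (k + p)) (c : U (k + q)),
    a = P (Fin.castAdd p) (castAdd_inj k p) b → a = P (Fin.castAdd q) (castAdd_inj k q) c →
    ∃ d : U (k + p + q), b = P (Fin.castAdd q) (castAdd_inj (k + p) q) d ∧
      P (amalgMap k p q) (amalgMap_inj k p q) d = c
  /-- Duplication axiom: `B ⊨ σ♭` for `σ = ∀x₀∃x₁(x₀ = x₁)`. -/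
  dup : ∀ a : U 1, ∃ b : U 2,
    P (fun _ => 0) (fin1_inj _) b = a ∧ P (fun _ => 1) (fin1_inj _) b = a ∧
    Sat (Term.equal (Term.var 0) (Term.var 1)) b
  /-- Constants axiom: `B ⊨ (∃x₀ (x₀ = c))♭` for each constant symbol `c`. -/
  const_ax : ∀ c : L.Constants, ∃ a : U 1,
    Sat (Term.equal (Term.var 0) (Constants.term c)) a
  /-- Functions axiom: `B ⊨ (∀x̄ ∃x_k (x_k = F(x̄)))♭` for each function symbol `F`. -/
  func_ax : ∀ {k : ℕ} (F : L.Functions k) (a : U k), ∃ b : U (k + 1),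
    a = P Fin.castSucc (Fin.castSucc_injective k) b ∧
    Sat (Term.equal (Term.var (Fin.last k)) (Term.func F fun i => Term.var i.castSucc)) b


section Helpers

variable {L : FirstOrder.Language}

/-- The atomic formula `x_u = x_v`. -/
abbrev eqv {n : ℕ} (u v : Fin n) : L.Formula (Fin n) :=
  Term.equal (Term.var u) (Term.var v)

lemma eqv_isQF {n : ℕ} (u v : Fin n) : (eqv (L := L) u v).IsQF :=
  (BoundedFormula.IsAtomic.equal _ _).isQF

lemma relabel_eqv {n k : ℕ} (u v : Fin n) (g : Fin n → Fin k) :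
    (eqv (L := L) u v).relabel g = eqv (g u) (g v) := rfl

lemma P_congr (B : FlatStructure L) {k n : ℕ} {f g : Fin k → Fin n}
    (hf : Function.Injective f) (hg : Function.Injective g) (h : f = g) (a : B.U n) :
    B.P f hf a = B.P g hg a := by subst h; rfl

/-- `Sat` coincides with realization under some valuation. -/
lemma exists_val (B : FlatStructure L) {n : ℕ} (a : B.U n) :
    ∃ (N : Type) (_ : L.Structure N) (v : Fin n → N),
      ∀ β : L.Formula (Fin n), β.IsQF → (B.Sat β a ↔ β.Realize v) := by
  obtain ⟨N, S, v, hv⟩ := B.delta_realized a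
  refine ⟨N, S, v, fun β hβ => ⟨hv β hβ, fun hr => ?_⟩⟩
  by_contra hs
  have := hv β.not hβ.not ((B.delta_complete a β hβ).2 hs)
  rw [Formula.realize_not] at this
  exact this hr

lemma sat_refl (B : FlatStructure L) {n : ℕ} (a : B.U n) (u : Fin n) :
    B.Sat (eqv u u) a := by
  obtain ⟨N, S, v, hv⟩ := exists_val B a
  exact (hv _ (eqv_isQF u u)).2 (by simp [Formula.realize_equal])

end Helpers

lemma eqv_eq {L : FirstOrder.Language} {n : ℕ} {u v u' v' : Fin n}
    (hu : (u : ℕ) = u') (hv : (v : ℕ) = v') : eqv (L := L) u v = eqv u' v' := by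
  rw [show u = u' from Fin.ext hu, show v = v' from Fin.ext hv]

lemma extend {L : FirstOrder.Language} (B : FlatStructure L) {k : ℕ} (d : B.U k) (j : Fin k) :
    ∃ e : B.U (k + 1), d = B.P (Fin.castAdd 1) (castAdd_inj k 1) e ∧
      B.Sat (eqv (Fin.castAdd 1 j) (Fin.last k)) e := by
  have hk : 0 < k := j.pos
  set p := k - 1 with hpdef
  have h1 : k = 1 + p := by omega
  set σ : Fin k ≃ Fin k := Equiv.swap ⟨0, hk⟩ j with hσ
  set X : B.U k := B.P σ σ.injective d with hX
  have hcastinj : Function.Injective (Fin.cast h1.symm : Fin (1 + p) → Fin k) :=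
    fun x y hxy => Fin.ext (by simpa using congrArg Fin.val hxy)
  have hcastinj' : Function.Injective (Fin.cast h1 : Fin k → Fin (1 + p)) :=
    fun x y hxy => Fin.ext (by simpa using congrArg Fin.val hxy)
  set X' : B.U (1 + p) := B.P (Fin.cast h1.symm) hcastinj X with hX'
  set a1 : B.U 1 := B.P (Fin.castAdd p) (castAdd_inj 1 p) X' with ha1
  obtain ⟨b, hb0, hb1, hbsat⟩ := B.dup a1
  have hb0' : a1 = B.P (Fin.castAdd 1) (castAdd_inj 1 1) b := by
    rw [← hb0]
    exact P_congr B (fin1_inj _) (castAdd_inj 1 1)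
      (funext fun i => by rw [Subsingleton.elim i 0]; rfl) b
  obtain ⟨D, hD1, hD2⟩ := B.amalg (p := p) (q := 1) a1 X' b ha1 hb0'
  -- the reassembling map
  set τ : Fin (k + 1) → Fin (1 + p + 1) := fun i =>
    if h : (i : ℕ) < k then ⟨(σ.symm ⟨i, h⟩ : Fin k), by omega⟩ else ⟨1 + p, by omega⟩
    with hτ
  have hτinj : Function.Injective τ := by
    intro x y hxy
    have hx2 := x.2
    have hy2 := y.2
    simp only [hτ] at hxy
    split_ifs at hxy with h1' h2' h2'
    · have hval : (σ.symm ⟨x, h1'⟩ : Fin k) = (σ.symm ⟨y, h2'⟩ : Fin k) :=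
        Fin.ext (by simpa using congrArg Fin.val hxy)
      have := σ.symm.injective hval
      exact Fin.ext (by simpa using congrArg Fin.val this)
    · exact absurd (congrArg Fin.val hxy) (by have := (σ.symm ⟨x, h1'⟩).2; simp; omega)
    · exact absurd (congrArg Fin.val hxy) (by have := (σ.symm ⟨y, h2'⟩).2; simp; omega)
    · exact Fin.ext (by omega)
  refine ⟨B.P τ hτinj D, ?_, ?_⟩
  · -- d = P (castAdd 1) (P τ D)
    have hss : (⇑σ ∘ ⇑σ.symm : Fin k → Fin k) = id := funext fun i => σ.apply_symm_apply i
    have hd : B.P (⇑σ.symm) σ.symm.injective X = d := by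
      rw [hX, ← B.P_comp σ.symm σ σ.symm.injective σ.injective
        (σ.injective.comp σ.symm.injective) d,
        P_congr B _ Function.injective_id hss d, B.P_id]
    have hXX' : B.P (Fin.cast h1) hcastinj' X' = X := by
      rw [hX', ← B.P_comp (Fin.cast h1) (Fin.cast h1.symm) hcastinj' hcastinj
        (hcastinj.comp hcastinj') X,
        P_congr B (f := Fin.cast h1.symm ∘ Fin.cast h1) (hcastinj.comp hcastinj')
          Function.injective_id (funext fun i => Fin.ext rfl) X, B.P_id]
    have hcomp1 : (τ ∘ Fin.castAdd 1 : Fin k → Fin (1 + p + 1))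
        = (Fin.castAdd 1 ∘ (Fin.cast h1 ∘ ⇑σ.symm) : Fin k → Fin (1 + p + 1)) := by
      funext i
      have hi : ((Fin.castAdd 1 i : Fin (k + 1)) : ℕ) < k := i.2
      simp only [Function.comp_apply, hτ, dif_pos hi]
      have : (⟨((Fin.castAdd 1 i : Fin (k + 1)) : ℕ), hi⟩ : Fin k) = i := Fin.ext (by simp)
      simp only [this]
      exact Fin.ext (by simp)
    calc d = B.P (⇑σ.symm) σ.symm.injective X := hd.symm
      _ = B.P (⇑σ.symm) σ.symm.injective (B.P (Fin.cast h1) hcastinj' X') := by rw [hXX']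
      _ = B.P (Fin.cast h1 ∘ ⇑σ.symm) (hcastinj'.comp σ.symm.injective) X' := by
          rw [B.P_comp σ.symm (Fin.cast h1) σ.symm.injective hcastinj'
            (hcastinj'.comp σ.symm.injective) X']
      _ = B.P (Fin.cast h1 ∘ ⇑σ.symm) (hcastinj'.comp σ.symm.injective)
            (B.P (Fin.castAdd 1) (castAdd_inj (1 + p) 1) D) := by rw [← hD1]
      _ = B.P (Fin.castAdd 1 ∘ (Fin.cast h1 ∘ ⇑σ.symm))
            ((castAdd_inj (1 + p) 1).comp (hcastinj'.comp σ.symm.injective)) D := by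
          rw [B.P_comp (Fin.cast h1 ∘ ⇑σ.symm) (Fin.castAdd 1)
            (hcastinj'.comp σ.symm.injective) (castAdd_inj (1 + p) 1)
            ((castAdd_inj (1 + p) 1).comp (hcastinj'.comp σ.symm.injective)) D]
      _ = B.P (τ ∘ Fin.castAdd 1) ((hτinj.comp (castAdd_inj k 1))) D := by
          rw [P_congr B _ _ hcomp1.symm D]
      _ = B.P (Fin.castAdd 1) (castAdd_inj k 1) (B.P τ hτinj D) := by
          rw [B.P_comp (Fin.castAdd 1) τ (castAdd_inj k 1) hτinj (hτinj.comp (castAdd_inj k 1)) D]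
  · -- satisfaction
    rw [B.P_sat τ hτinj D _ (eqv_isQF _ _), relabel_eqv]
    -- from b : Sat (eqv 0 1) b, transfer to D
    rw [← hD2, B.P_sat _ _ D _ (eqv_isQF _ _), relabel_eqv] at hbsat
    have h01 : τ (Fin.castAdd 1 j) = amalgMap 1 p 1 (0 : Fin 2) := by
      have hj : ((Fin.castAdd 1 j : Fin (k + 1)) : ℕ) < k := j.2
      apply Fin.ext
      simp only [hτ, dif_pos hj, amalgMap]
      have : (⟨((Fin.castAdd 1 j : Fin (k + 1)) : ℕ), hj⟩ : Fin k) = j := Fin.ext (by simp)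
      rw [this]
      simp [hσ, Equiv.symm_swap, Equiv.swap_apply_right]
    have h02 : τ (Fin.last k) = amalgMap 1 p 1 (1 : Fin 2) := by
      have hlk : ¬ ((Fin.last k : Fin (k + 1)) : ℕ) < k := by simp
      apply Fin.ext
      simp only [hτ, dif_neg hlk, amalgMap]
      norm_num
    rw [h01, h02]
    exact hbsat

lemma exists_ext {L : FirstOrder.Language} (B : FlatStructure L) {m : ℕ} (a : B.U m) :
    ∀ (n : ℕ) (f : Fin n → Fin m),
    ∃ c : B.U (m + n), a = B.P (Fin.castAdd n) (castAdd_inj m n) c ∧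
      ∀ i : Fin n, B.Sat (eqv (Fin.castAdd n (f i)) (Fin.natAdd m i)) c := by
  intro n
  induction n with
  | zero =>
    intro f
    refine ⟨a, ?_, fun i => i.elim0⟩
    rw [P_congr B (castAdd_inj m 0) Function.injective_id (funext fun i => Fin.ext rfl) a,
      B.P_id]
  | succ n ih =>
    intro f
    obtain ⟨c0, hc0, hsat0⟩ := ih (f ∘ Fin.castSucc)
    obtain ⟨e, he, hesat⟩ := extend B c0 (Fin.castAdd n (f (Fin.last n)))
    refine ⟨e, ?_, ?_⟩
    · have hcomp : (Fin.castAdd (n + 1) : Fin m → Fin (m + (n + 1)))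
          = ((Fin.castAdd 1 : Fin (m + n) → Fin (m + n + 1)) ∘ Fin.castAdd n) :=
        funext fun i => Fin.ext rfl
      rw [P_congr B (castAdd_inj m (n + 1)) ((castAdd_inj (m + n) 1).comp (castAdd_inj m n))
        hcomp e,
        B.P_comp (Fin.castAdd n) (Fin.castAdd 1) (castAdd_inj m n) (castAdd_inj (m + n) 1)
          ((castAdd_inj (m + n) 1).comp (castAdd_inj m n)) e, ← he, hc0]
    · refine Fin.lastCases ?_ ?_
      · -- i = last n
        have heq : eqv (L := L) (Fin.castAdd (n + 1) (f (Fin.last n))) (Fin.natAdd m (Fin.last n))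
            = eqv (Fin.castAdd 1 (Fin.castAdd n (f (Fin.last n)))) (Fin.last (m + n)) :=
          eqv_eq rfl rfl
        rw [heq]
        exact hesat
      · intro i0
        have h := hsat0 i0
        rw [he, B.P_sat _ _ e _ (eqv_isQF _ _), relabel_eqv] at h
        have heq : eqv (L := L) (Fin.castAdd (n + 1) (f (Fin.castSucc i0)))
              (Fin.natAdd m (Fin.castSucc i0))
            = eqv (Fin.castAdd 1 (Fin.castAdd n ((f ∘ Fin.castSucc) i0)))
              (Fin.castAdd 1 (Fin.natAdd m i0)) :=
          eqv_eq rfl rfl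
        rw [heq]
        exact h

/-- In any flat structure `B`, for any function `f* : n → m` (not necessarily injective) and
any `a ∈ U_m`, there is a unique `c ∈ U_{m+n}` such that `a ≤ c` (i.e. `a = P^{id}_{m,m+n}(c)`)
and `⋀_{i<n} x_{f*(i)} = x_{m+i}` belongs to `Δ_c`. -/
theorem stmt5 {L : FirstOrder.Language} (B : FlatStructure L)
    {n m : ℕ} (f : Fin n → Fin m) (a : B.U m) :
    ∃! c : B.U (m + n),
      a = B.P (Fin.castAdd n) (castAdd_inj m n) c ∧
      ∀ i : Fin n, B.Sat
        (Term.equal (Term.var (Fin.castAdd n (f i))) (Term.var (Fin.natAdd m i))) c := by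
  obtain ⟨c, hc1, hc2⟩ := exists_ext B a n f
  refine ⟨c, ⟨hc1, hc2⟩, ?_⟩
  rintro c' ⟨h1', h2'⟩
  -- amalgamate c' and c over a
  obtain ⟨D, hD1, hD2⟩ := B.amalg (p := n) (q := n) a c' c h1' hc1
  obtain ⟨N, S, v, hv⟩ := exists_val B D
  have key : ∀ i : Fin (m + n), B.Sat (eqv (Fin.castAdd n i) (amalgMap m n n i)) D := by
    intro i
    rw [hv _ (eqv_isQF _ _), Formula.realize_equal]
    simp only [Term.realize_var]
    by_cases h : (i : ℕ) < m
    · congr 1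
      exact Fin.ext (by simp [amalgMap, dif_pos h])
    · set i0 : Fin n := ⟨(i : ℕ) - m, by omega⟩ with hi0
      have e1 := h2' i0
      rw [hD1, B.P_sat _ _ D _ (eqv_isQF _ _), relabel_eqv,
        hv _ (eqv_isQF _ _), Formula.realize_equal] at e1
      simp only [Term.realize_var] at e1
      have e2 := hc2 i0
      rw [← hD2, B.P_sat _ _ D _ (eqv_isQF _ _), relabel_eqv,
        hv _ (eqv_isQF _ _), Formula.realize_equal] at e2
      simp only [Term.realize_var] at e2
      have hu : Fin.castAdd n (Fin.castAdd n (f i0)) = amalgMap m n n (Fin.castAdd n (f i0)) :=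
        Fin.ext (by simp [amalgMap, dif_pos (f i0).2])
      rw [hu] at e1
      have hw1 : (Fin.castAdd n i : Fin (m + n + n)) = Fin.castAdd n (Fin.natAdd m i0) :=
        Fin.ext (by simp [hi0]; omega)
      have hw2 : amalgMap m n n i = amalgMap m n n (Fin.natAdd m i0) := by
        have hx : ¬ ((Fin.natAdd m i0 : Fin (m + n)) : ℕ) < m := by simp
        apply Fin.ext
        simp only [amalgMap, dif_neg h, dif_neg hx]
        simp only [Fin.coe_natAdd, hi0]
        omega
      rw [hw1, hw2, ← e1, e2]
  have := B.eq_axiom (Fin.castAdd n) (amalgMap m n n) (castAdd_inj (m + n) n)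
    (amalgMap_inj m n n) D key
  rw [← hD1, hD2] at this
  exact this
end

section
/- For any two Hausdorff flat structures B_1, B_2, the following are equivalent: (1) B_1 ≡_{∞,ω} B_2; (2) B_1 ≅ B_2; (3) there is a unique L♭-isomorphism from B_1 to B_2. -/
open FirstOrder FirstOrder.Language

/-- Satisfaction of the flattened formula `φ♭` at an element of a flat structure `B`,
following the recursive definition of `φ ↦ φ♭`:
`(∃y θ)♭(z) = ∃w (U_{n+1}(w) ∧ θ♭(w) ∧ P^{id}_{n,n+1}(w) = z)`. -/
def FlatStructure.RealizeFlat {L : FirstOrder.Language} (B : FlatStructure L) :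
    ∀ {n : ℕ}, InfForm L n → B.U n → Prop
  | _, .base φ _, a => B.Sat φ a
  | _, .conj _ f, a => ∀ i, B.RealizeFlat (f i) a
  | _, .not φ, a => ¬ B.RealizeFlat φ a
  | n, .ex φ, a => ∃ w : B.U (n + 1),
      B.RealizeFlat φ w ∧ B.P Fin.castSucc (Fin.castSucc_injective n) w = a

/-- A surjective homomorphism of flat structures: an onto map preserving each sort `U_k`,
each quantifier-free predicate `α♭`, and commuting with the projections `P^f`. -/
def IsFlatHom {L : FirstOrder.Language} (B B' : FlatStructure L)
    (j : ∀ n : ℕ, B.U n → B'.U n) : Prop :=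
  (∀ n : ℕ, Function.Surjective (j n)) ∧
  (∀ (n : ℕ) (φ : L.Formula (Fin n)), φ.IsQF → ∀ a : B.U n,
    (B.Sat φ a ↔ B'.Sat φ (j n a))) ∧
  (∀ (k n : ℕ) (f : Fin k → Fin n) (hf : Function.Injective f) (a : B.U n),
    j k (B.P f hf a) = B'.P f hf (j n a))

/-- A flat structure is Hausdorff if distinct elements (of any sort) have distinct
`♭`-types. -/
def FlatStructure.IsHausdorff {L : FirstOrder.Language} (B : FlatStructure L) : Prop :=
  ∀ (n : ℕ) (a b : B.U n),
    (∀ φ : InfForm L n, B.RealizeFlat φ a ↔ B.RealizeFlat φ b) → a = b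

/-- A back-and-forth system between structures `A` and `B` in a common language. -/
def IsBFSystem₂ (L' : FirstOrder.Language) (A B : Type*) [L'.Structure A] [L'.Structure B]
    (F : ∀ n : ℕ, Set ((Fin n → A) × (Fin n → B))) : Prop :=
  (∃ n p, p ∈ F n) ∧
  (∀ n, ∀ p ∈ F n, ∀ φ : L'.Formula (Fin n), φ.IsAtomic →
      (φ.Realize p.1 ↔ φ.Realize p.2)) ∧
  (∀ n, ∀ p ∈ F n, ∀ c : A, ∃ d : B, (Fin.snoc p.1 c, Fin.snoc p.2 d) ∈ F (n + 1)) ∧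
  (∀ n, ∀ p ∈ F n, ∀ d : B, ∃ c : A, (Fin.snoc p.1 c, Fin.snoc p.2 d) ∈ F (n + 1))

/-- Back-and-forth equivalence of structures. -/
def BFEquiv (L' : FirstOrder.Language) (A B : Type*) [L'.Structure A] [L'.Structure B] : Prop :=
  ∃ F, IsBFSystem₂ L' A B F

/-- The language `L♭`: unary function symbols `P^f_{k,n}` for injective `f`, and unary
relation symbols `U_n` and `α♭` for quantifier-free `α`. -/
def flatLang (L : FirstOrder.Language) : FirstOrder.Language where
  Functions k := match k with
    | 1 => Σ kn : ℕ × ℕ, { f : Fin kn.1 → Fin kn.2 // Function.Injective f }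
    | _ => PEmpty
  Relations k := match k with
    | 1 => ℕ ⊕ Σ n : ℕ, { φ : L.Formula (Fin n) // φ.IsQF }
    | _ => PEmpty

/-- The universe of a flat structure, as a single-sorted structure. -/
def FlatStructure.carrier {L : FirstOrder.Language} (B : FlatStructure L) : Type _ :=
  Σ n : ℕ, B.U n

/-- A flat structure as an honest `L♭`-structure on its carrier. -/
instance flatStr {L : FirstOrder.Language} (B : FlatStructure L) :
    (flatLang L).Structure B.carrier where
  funMap {l} F v :=
    match l, F with
    | 1, ⟨⟨k, n⟩, f, hf⟩ =>
      if h : (v 0).1 = n then ⟨k, B.P f hf (h ▸ (v 0).2)⟩ else v 0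
  RelMap {l} R v :=
    match l, R with
    | 1, Sum.inl n => (v 0).1 = n
    | 1, Sum.inr ⟨n, φ, _⟩ => ∃ h : (v 0).1 = n, B.Sat φ (h ▸ (v 0).2)


namespace FlatProof

open FirstOrder FirstOrder.Language

variable {L : FirstOrder.Language} {B₁ B₂ : FlatStructure L}

lemma fin1_eta {α : Type*} (v : Fin 1 → α) : v = fun _ => v 0 :=
  funext fun i => by rw [Subsingleton.elim i 0]

lemma sigma_inj {B : FlatStructure L} {n : ℕ} {x y : B.U n}
    (h : (⟨n, x⟩ : B.carrier) = ⟨n, y⟩) : x = y := by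
  simpa using h

lemma funMap_flat (B : FlatStructure L) {k n : ℕ} (f : Fin k → Fin n)
    (hf : Function.Injective f) (x : B.U n) :
    @Structure.funMap (flatLang L) B.carrier (flatStr B) 1 ⟨⟨k, n⟩, f, hf⟩
      (fun _ => (⟨n, x⟩ : B.carrier)) = ⟨k, B.P f hf x⟩ :=
  dif_pos rfl

lemma funMap_flat_ne (B : FlatStructure L) {k n m : ℕ} (f : Fin k → Fin n)
    (hf : Function.Injective f) (x : B.U m) (hmn : m ≠ n) :
    @Structure.funMap (flatLang L) B.carrier (flatStr B) 1 ⟨⟨k, n⟩, f, hf⟩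
      (fun _ => (⟨m, x⟩ : B.carrier)) = ⟨m, x⟩ :=
  dif_neg hmn

lemma relMap_inl (B : FlatStructure L) (m : ℕ) (v : Fin 1 → B.carrier) :
    @Structure.RelMap (flatLang L) B.carrier (flatStr B) 1 (Sum.inl m) v ↔ (v 0).1 = m :=
  Iff.rfl

lemma relMap_inr (B : FlatStructure L) {n : ℕ} (φ : L.Formula (Fin n)) (hφ : φ.IsQF)
    (x : B.U n) :
    @Structure.RelMap (flatLang L) B.carrier (flatStr B) 1 (Sum.inr ⟨n, φ, hφ⟩)
      (fun _ => (⟨n, x⟩ : B.carrier)) ↔ B.Sat φ x := by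
  constructor
  · rintro ⟨h, hs⟩
    exact hs
  · intro hs
    exact ⟨rfl, hs⟩

lemma relMap_inr_ne (B : FlatStructure L) {n m : ℕ} (φ : L.Formula (Fin n)) (hφ : φ.IsQF)
    (x : B.U m) (hmn : m ≠ n) :
    ¬ @Structure.RelMap (flatLang L) B.carrier (flatStr B) 1 (Sum.inr ⟨n, φ, hφ⟩)
      (fun _ => (⟨m, x⟩ : B.carrier)) := by
  rintro ⟨h, -⟩
  exact hmn h

end FlatProof

namespace FlatProof

variable {L : FirstOrder.Language} {B₁ B₂ : FlatStructure L}
  {F : ∀ n : ℕ, Set ((Fin n → B₁.carrier) × (Fin n → B₂.carrier))}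

/-- Helper: a unary function symbol of `flatLang L`. -/
def Pfun (L : FirstOrder.Language) (k n : ℕ) (f : Fin k → Fin n)
    (hf : Function.Injective f) : (flatLang L).Functions 1 := ⟨⟨k, n⟩, f, hf⟩


lemma bf_rel (hF : IsBFSystem₂ (flatLang L) B₁.carrier B₂.carrier F) {m : ℕ}
    {p : (Fin m → B₁.carrier) × (Fin m → B₂.carrier)} (hp : p ∈ F m)
    (R : (flatLang L).Relations 1) (i : Fin m) :
    @Structure.RelMap (flatLang L) B₁.carrier (flatStr B₁) 1 R (fun _ => p.1 i) ↔
    @Structure.RelMap (flatLang L) B₂.carrier (flatStr B₂) 1 R (fun _ => p.2 i) := by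
  have h := hF.2.1 m p hp (R.formula fun _ => Term.var i) (BoundedFormula.IsAtomic.rel _ _)
  rw [Formula.realize_rel, Formula.realize_rel] at h
  exact h

lemma bf_eq (hF : IsBFSystem₂ (flatLang L) B₁.carrier B₂.carrier F) {m : ℕ}
    {p : (Fin m → B₁.carrier) × (Fin m → B₂.carrier)} (hp : p ∈ F m)
    (t₁ t₂ : (flatLang L).Term (Fin m)) :
    (t₁.realize p.1 = t₂.realize p.1) ↔ (t₁.realize p.2 = t₂.realize p.2) := by
  have h := hF.2.1 m p hp (t₁.equal t₂) (BoundedFormula.IsAtomic.equal _ _)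
  rwa [Formula.realize_equal, Formula.realize_equal] at h

lemma bf_sort (hF : IsBFSystem₂ (flatLang L) B₁.carrier B₂.carrier F) {m : ℕ}
    {p : (Fin m → B₁.carrier) × (Fin m → B₂.carrier)} (hp : p ∈ F m) (i : Fin m) :
    (p.1 i).1 = (p.2 i).1 := by
  have h2 : (p.2 i).1 = (p.1 i).1 := (bf_rel hF hp (Sum.inl (p.1 i).1) i).mp rfl
  exact h2.symm

/-- `a` and `b` are linked by the back-and-forth system `F`. -/
def Linked (F : ∀ n : ℕ, Set ((Fin n → B₁.carrier) × (Fin n → B₂.carrier))) {n : ℕ}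
    (a : B₁.U n) (b : B₂.U n) : Prop :=
  ∃ (m : ℕ) (p : (Fin m → B₁.carrier) × (Fin m → B₂.carrier)) (_ : p ∈ F m) (i : Fin m),
    p.1 i = ⟨n, a⟩ ∧ p.2 i = ⟨n, b⟩

lemma snoc_sort (hF : IsBFSystem₂ (flatLang L) B₁.carrier B₂.carrier F) {m : ℕ}
    {p : (Fin m → B₁.carrier) × (Fin m → B₂.carrier)} (hp : p ∈ F m) (c : B₁.carrier) :
    ∃ d : B₂.carrier, d.1 = c.1 ∧ (Fin.snoc p.1 c, Fin.snoc p.2 d) ∈ F (m + 1) := by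
  obtain ⟨d, hq⟩ := hF.2.2.1 m p hp c
  have hs : ((Fin.snoc p.1 c : Fin (m+1) → B₁.carrier) (Fin.last m)).1 =
      ((Fin.snoc p.2 d : Fin (m+1) → B₂.carrier) (Fin.last m)).1 := bf_sort hF hq (Fin.last m)
  rw [Fin.snoc_last, Fin.snoc_last] at hs
  exact ⟨d, hs.symm, hq⟩

lemma snoc_sort' (hF : IsBFSystem₂ (flatLang L) B₁.carrier B₂.carrier F) {m : ℕ}
    {p : (Fin m → B₁.carrier) × (Fin m → B₂.carrier)} (hp : p ∈ F m) (d : B₂.carrier) :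
    ∃ c : B₁.carrier, c.1 = d.1 ∧ (Fin.snoc p.1 c, Fin.snoc p.2 d) ∈ F (m + 1) := by
  obtain ⟨c, hq⟩ := hF.2.2.2 m p hp d
  have hs : ((Fin.snoc p.1 c : Fin (m+1) → B₁.carrier) (Fin.last m)).1 =
      ((Fin.snoc p.2 d : Fin (m+1) → B₂.carrier) (Fin.last m)).1 := bf_sort hF hq (Fin.last m)
  rw [Fin.snoc_last, Fin.snoc_last] at hs
  exact ⟨c, hs, hq⟩

lemma linked_P (hF : IsBFSystem₂ (flatLang L) B₁.carrier B₂.carrier F) {k n : ℕ}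
    (f : Fin k → Fin n) (hf : Function.Injective f) {a : B₁.U n} {b : B₂.U n}
    (h : Linked F a b) : Linked F (B₁.P f hf a) (B₂.P f hf b) := by
  obtain ⟨m, p, hp, i, h1, h2⟩ := h
  obtain ⟨d, hd, hq⟩ := snoc_sort hF hp ⟨k, B₁.P f hf a⟩
  have he := bf_eq hF hq
    (Term.func (Pfun L k n f hf) fun _ => Term.var i.castSucc)
    (Term.var (Fin.last m))
  have he1 : (@Structure.funMap _ _ (flatStr B₁) 1 ⟨⟨k, n⟩, f, hf⟩
        (fun _ => (Fin.snoc p.1 (⟨k, B₁.P f hf a⟩ : B₁.carrier) : Fin (m + 1) → B₁.carrier) i.castSucc) =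
        (Fin.snoc p.1 (⟨k, B₁.P f hf a⟩ : B₁.carrier) : Fin (m + 1) → B₁.carrier) (Fin.last m)) ↔
      (@Structure.funMap _ _ (flatStr B₂) 1 ⟨⟨k, n⟩, f, hf⟩
        (fun _ => (Fin.snoc p.2 d : Fin (m + 1) → B₂.carrier) i.castSucc) =
        (Fin.snoc p.2 d : Fin (m + 1) → B₂.carrier) (Fin.last m)) := he
  erw [Fin.snoc_castSucc, Fin.snoc_last, Fin.snoc_castSucc, Fin.snoc_last] at he1
  rw [h1, h2, funMap_flat, funMap_flat] at he1
  have hd2 : (⟨k, B₂.P f hf b⟩ : B₂.carrier) = d := he1.mp rfl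
  exact ⟨m + 1, _, hq, Fin.last m, Fin.snoc_last (α := fun _ => _) _ _,
    by show (Fin.snoc p.2 d : Fin (m + 1) → B₂.carrier) (Fin.last m) = _
       rw [Fin.snoc_last, ← hd2]⟩

lemma linked_sameType (hF : IsBFSystem₂ (flatLang L) B₁.carrier B₂.carrier F) :
    ∀ {n : ℕ} (φ : InfForm L n) {a : B₁.U n} {b : B₂.U n},
      Linked F a b → (B₁.RealizeFlat φ a ↔ B₂.RealizeFlat φ b) := by
  intro n φ
  induction φ with
  | @base n φ hφ =>
    rintro a b ⟨m, p, hp, i, h1, h2⟩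
    have h := bf_rel hF hp (Sum.inr ⟨n, φ, hφ⟩) i
    rw [show (fun _ : Fin 1 => p.1 i) = fun _ => (⟨n, a⟩ : B₁.carrier) from
        funext fun _ => h1,
      show (fun _ : Fin 1 => p.2 i) = fun _ => (⟨n, b⟩ : B₂.carrier) from
        funext fun _ => h2] at h
    rw [relMap_inr, relMap_inr] at h
    exact h
  | conj ι f ih =>
    intro a b h
    exact forall_congr' fun i => ih i h
  | not φ ih =>
    intro a b h
    exact not_congr (ih h)
  | @ex n φ ih =>
    rintro a b ⟨m, p, hp, i, h1, h2⟩
    constructor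
    · rintro ⟨w, hw, hwa⟩
      obtain ⟨d, hd, hq⟩ := snoc_sort hF hp ⟨n + 1, w⟩
      obtain ⟨nd, w'⟩ := d
      have hd' : nd = n + 1 := hd
      subst hd'
      have hlink : Linked F w w' := ⟨m + 1, _, hq, Fin.last m, Fin.snoc_last (α := fun _ => _) _ _, Fin.snoc_last (α := fun _ => _) _ _⟩
      have he := bf_eq hF hq
        (Term.func (Pfun L n (n + 1) Fin.castSucc (Fin.castSucc_injective n))
          fun _ => Term.var (Fin.last m))
        (Term.var i.castSucc)
      have he1 : (@Structure.funMap _ _ (flatStr B₁) 1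
            ⟨⟨n, n + 1⟩, Fin.castSucc, Fin.castSucc_injective n⟩
            (fun _ => (Fin.snoc p.1 (⟨n + 1, w⟩ : B₁.carrier) : Fin (m + 1) → B₁.carrier) (Fin.last m)) =
            (Fin.snoc p.1 (⟨n + 1, w⟩ : B₁.carrier) : Fin (m + 1) → B₁.carrier) i.castSucc) ↔
          (@Structure.funMap _ _ (flatStr B₂) 1
            ⟨⟨n, n + 1⟩, Fin.castSucc, Fin.castSucc_injective n⟩
            (fun _ => (Fin.snoc p.2 (⟨n + 1, w'⟩ : B₂.carrier) : Fin (m + 1) → B₂.carrier) (Fin.last m)) =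
            (Fin.snoc p.2 (⟨n + 1, w'⟩ : B₂.carrier) : Fin (m + 1) → B₂.carrier) i.castSucc) := he
      erw [Fin.snoc_castSucc, Fin.snoc_last, Fin.snoc_castSucc, Fin.snoc_last] at he1
      rw [h1, h2, funMap_flat, funMap_flat] at he1
      refine ⟨w', (ih hlink).mp hw, ?_⟩
      exact sigma_inj (he1.mp (by rw [hwa]))
    · rintro ⟨w', hw', hwb⟩
      obtain ⟨c, hc, hq⟩ := snoc_sort' hF hp ⟨n + 1, w'⟩
      obtain ⟨nc, w⟩ := c
      have hc' : nc = n + 1 := hc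
      subst hc'
      have hlink : Linked F w w' := ⟨m + 1, _, hq, Fin.last m, Fin.snoc_last (α := fun _ => _) _ _, Fin.snoc_last (α := fun _ => _) _ _⟩
      have he := bf_eq hF hq
        (Term.func (Pfun L n (n + 1) Fin.castSucc (Fin.castSucc_injective n))
          fun _ => Term.var (Fin.last m))
        (Term.var i.castSucc)
      have he1 : (@Structure.funMap _ _ (flatStr B₁) 1
            ⟨⟨n, n + 1⟩, Fin.castSucc, Fin.castSucc_injective n⟩
            (fun _ => (Fin.snoc p.1 (⟨n + 1, w⟩ : B₁.carrier) : Fin (m + 1) → B₁.carrier) (Fin.last m)) =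
            (Fin.snoc p.1 (⟨n + 1, w⟩ : B₁.carrier) : Fin (m + 1) → B₁.carrier) i.castSucc) ↔
          (@Structure.funMap _ _ (flatStr B₂) 1
            ⟨⟨n, n + 1⟩, Fin.castSucc, Fin.castSucc_injective n⟩
            (fun _ => (Fin.snoc p.2 (⟨n + 1, w'⟩ : B₂.carrier) : Fin (m + 1) → B₂.carrier) (Fin.last m)) =
            (Fin.snoc p.2 (⟨n + 1, w'⟩ : B₂.carrier) : Fin (m + 1) → B₂.carrier) i.castSucc) := he
      erw [Fin.snoc_castSucc, Fin.snoc_last, Fin.snoc_castSucc, Fin.snoc_last] at he1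
      rw [h1, h2, funMap_flat, funMap_flat] at he1
      refine ⟨w, (ih hlink).mpr hw', ?_⟩
      exact sigma_inj (he1.mpr (by rw [hwb]))

lemma linked_total (hF : IsBFSystem₂ (flatLang L) B₁.carrier B₂.carrier F) {n : ℕ}
    (a : B₁.U n) : ∃ b : B₂.U n, Linked F a b := by
  obtain ⟨m, p, hp⟩ := hF.1
  obtain ⟨d, hd, hq⟩ := snoc_sort hF hp ⟨n, a⟩
  obtain ⟨nd, b⟩ := d
  have hd' : nd = n := hd
  subst hd'
  exact ⟨b, m + 1, _, hq, Fin.last m, Fin.snoc_last (α := fun _ => _) _ _, Fin.snoc_last (α := fun _ => _) _ _⟩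

lemma linked_cototal (hF : IsBFSystem₂ (flatLang L) B₁.carrier B₂.carrier F) {n : ℕ}
    (b : B₂.U n) : ∃ a : B₁.U n, Linked F a b := by
  obtain ⟨m, p, hp⟩ := hF.1
  obtain ⟨c, hc, hq⟩ := snoc_sort' hF hp ⟨n, b⟩
  obtain ⟨nc, a⟩ := c
  have hc' : nc = n := hc
  subst hc'
  exact ⟨a, m + 1, _, hq, Fin.last m, Fin.snoc_last (α := fun _ => _) _ _, Fin.snoc_last (α := fun _ => _) _ _⟩

lemma linked_unique_right (hF : IsBFSystem₂ (flatLang L) B₁.carrier B₂.carrier F)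
    (h₂ : B₂.IsHausdorff) {n : ℕ} {a : B₁.U n} {b b' : B₂.U n}
    (hb : Linked F a b) (hb' : Linked F a b') : b = b' :=
  h₂ n b b' fun φ => (linked_sameType hF φ hb).symm.trans (linked_sameType hF φ hb')

lemma linked_unique_left (hF : IsBFSystem₂ (flatLang L) B₁.carrier B₂.carrier F)
    (h₁ : B₁.IsHausdorff) {n : ℕ} {a a' : B₁.U n} {b : B₂.U n}
    (ha : Linked F a b) (ha' : Linked F a' b) : a = a' :=
  h₁ n a a' fun φ => (linked_sameType hF φ ha).trans (linked_sameType hF φ ha').symm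

end FlatProof

namespace FlatProof

variable {L : FirstOrder.Language} {B₁ B₂ : FlatStructure L}

lemma iso_bfsys (e : B₁.carrier ≃[flatLang L] B₂.carrier) :
    IsBFSystem₂ (flatLang L) B₁.carrier B₂.carrier
      (fun n => {p | p.2 = e ∘ p.1}) := by
  refine ⟨⟨0, (Fin.elim0, Fin.elim0), funext fun i => i.elim0⟩, ?_, ?_, ?_⟩
  · intro n p hp φ _
    have hp' : p.2 = e ∘ p.1 := hp
    rw [hp']
    exact (StrongHomClass.realize_formula e φ).symm
  · intro n p hp c
    refine ⟨e c, ?_⟩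
    have hp' : p.2 = e ∘ p.1 := hp
    show Fin.snoc p.2 (e c) = e ∘ Fin.snoc p.1 c
    rw [Fin.comp_snoc, ← hp']
  · intro n p hp d
    refine ⟨e.symm d, ?_⟩
    have hp' : p.2 = e ∘ p.1 := hp
    show Fin.snoc p.2 d = e ∘ Fin.snoc p.1 (e.symm d)
    rw [Fin.comp_snoc, ← hp', e.apply_symm_apply]

lemma iso_flat (e : B₁.carrier ≃[flatLang L] B₂.carrier) {n : ℕ} (a : B₁.U n) :
    ∃ b : B₂.U n, e ⟨n, a⟩ = ⟨n, b⟩ ∧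
      ∀ φ : InfForm L n, B₁.RealizeFlat φ a ↔ B₂.RealizeFlat φ b := by
  have hF := iso_bfsys e
  have hp : ((fun _ : Fin 1 => (⟨n, a⟩ : B₁.carrier)),
      e ∘ fun _ : Fin 1 => (⟨n, a⟩ : B₁.carrier)) ∈
      (fun k => {p : (Fin k → B₁.carrier) × (Fin k → B₂.carrier) | p.2 = e ∘ p.1}) 1 := rfl
  have hs : ((⟨n, a⟩ : B₁.carrier)).1 = (e ⟨n, a⟩).1 := bf_sort hF hp 0
  rcases hEb : e ⟨n, a⟩ with ⟨mb, b⟩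
  rw [hEb] at hs
  have hs' : mb = n := hs.symm
  subst hs'
  refine ⟨b, rfl, fun φ => linked_sameType hF φ ⟨1, _, hp, 0, rfl, ?_⟩⟩
  show e ⟨mb, a⟩ = ⟨mb, b⟩
  exact hEb

lemma bf_to_iso (h₁ : B₁.IsHausdorff) (h₂ : B₂.IsHausdorff)
    (h : BFEquiv (flatLang L) B₁.carrier B₂.carrier) :
    Nonempty (B₁.carrier ≃[flatLang L] B₂.carrier) := by
  obtain ⟨F, hF⟩ := h
  choose jb hjb using fun x : B₁.carrier => linked_total hF (F := F) x.2
  let j : B₁.carrier → B₂.carrier := fun x => ⟨x.1, jb x⟩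
  have hinj : Function.Injective j := by
    rintro ⟨n, a⟩ ⟨n', a'⟩ hxy
    have hfst : n = n' := congrArg Sigma.fst hxy
    subst hfst
    have hsnd : jb ⟨n, a⟩ = jb ⟨n, a'⟩ := sigma_inj hxy
    have haa : a = a' := linked_unique_left hF h₁ (hjb ⟨n, a⟩)
      (by rw [hsnd]; exact hjb ⟨n, a'⟩)
    rw [haa]
  have hsurj : Function.Surjective j := by
    rintro ⟨n, b⟩
    obtain ⟨a, ha⟩ := linked_cototal hF (F := F) b
    refine ⟨⟨n, a⟩, ?_⟩
    show (⟨n, jb ⟨n, a⟩⟩ : B₂.carrier) = ⟨n, b⟩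
    rw [linked_unique_right hF h₂ (hjb ⟨n, a⟩) ha]
  refine ⟨⟨Equiv.ofBijective j ⟨hinj, hsurj⟩, ?_, ?_⟩⟩
  · intro l Fc x
    rcases l with _ | l
    · exact PEmpty.elim Fc
    rcases l with _ | l
    swap
    · exact PEmpty.elim Fc
    obtain ⟨⟨k, n⟩, f, hf⟩ := Fc
    rcases hx : x 0 with ⟨m, a⟩
    rw [fin1_eta x, hx]
    by_cases hmn : m = n
    · subst hmn
      have l1 : j (@Structure.funMap _ _ (flatStr B₁) 1 ⟨⟨k, m⟩, f, hf⟩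
          (fun _ => (⟨m, a⟩ : B₁.carrier))) = ⟨k, jb ⟨k, B₁.P f hf a⟩⟩ := by
        rw [funMap_flat]
      have l2 : @Structure.funMap _ _ (flatStr B₂) 1 ⟨⟨k, m⟩, f, hf⟩
          (fun _ => (⟨m, jb ⟨m, a⟩⟩ : B₂.carrier)) = ⟨k, B₂.P f hf (jb ⟨m, a⟩)⟩ :=
        funMap_flat B₂ f hf _
      show j (@Structure.funMap _ _ (flatStr B₁) 1 ⟨⟨k, m⟩, f, hf⟩
          (fun _ => (⟨m, a⟩ : B₁.carrier))) =
        @Structure.funMap _ _ (flatStr B₂) 1 ⟨⟨k, m⟩, f, hf⟩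
          (fun _ => (⟨m, jb ⟨m, a⟩⟩ : B₂.carrier))
      rw [l1, l2]
      exact congrArg (fun y => (⟨k, y⟩ : B₂.carrier))
        (linked_unique_right hF h₂ (hjb ⟨k, B₁.P f hf a⟩) (linked_P hF f hf (hjb ⟨m, a⟩)))
    · show j (@Structure.funMap _ _ (flatStr B₁) 1 ⟨⟨k, n⟩, f, hf⟩
          (fun _ => (⟨m, a⟩ : B₁.carrier))) =
        @Structure.funMap _ _ (flatStr B₂) 1 ⟨⟨k, n⟩, f, hf⟩
          (fun _ => (⟨m, jb ⟨m, a⟩⟩ : B₂.carrier))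
      rw [funMap_flat_ne B₁ f hf a hmn, funMap_flat_ne B₂ f hf _ hmn]
  · intro l R x
    rcases l with _ | l
    · exact PEmpty.elim R
    rcases l with _ | l
    swap
    · exact PEmpty.elim R
    rcases hx : x 0 with ⟨m, a⟩
    rw [fin1_eta x, hx]
    rcases R with nR | ⟨nR, φ, hφ⟩
    · show ((⟨m, jb ⟨m, a⟩⟩ : B₂.carrier).1 = nR) ↔ ((⟨m, a⟩ : B₁.carrier).1 = nR)
      exact Iff.rfl
    · by_cases hmn : m = nR
      · subst hmn
        show @Structure.RelMap _ _ (flatStr B₂) 1 (Sum.inr ⟨m, φ, hφ⟩)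
            (fun _ => (⟨m, jb ⟨m, a⟩⟩ : B₂.carrier)) ↔
          @Structure.RelMap _ _ (flatStr B₁) 1 (Sum.inr ⟨m, φ, hφ⟩)
            (fun _ => (⟨m, a⟩ : B₁.carrier))
        rw [relMap_inr B₂ φ hφ, relMap_inr B₁ φ hφ]
        have hst : B₁.Sat φ a ↔ B₂.Sat φ (jb ⟨m, a⟩) :=
          linked_sameType hF (InfForm.base φ hφ) (hjb ⟨m, a⟩)
        exact hst.symm
      · show @Structure.RelMap _ _ (flatStr B₂) 1 (Sum.inr ⟨nR, φ, hφ⟩)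
            (fun _ => (⟨m, jb ⟨m, a⟩⟩ : B₂.carrier)) ↔
          @Structure.RelMap _ _ (flatStr B₁) 1 (Sum.inr ⟨nR, φ, hφ⟩)
            (fun _ => (⟨m, a⟩ : B₁.carrier))
        constructor
        · rintro ⟨hh, -⟩; exact absurd hh hmn
        · rintro ⟨hh, -⟩; exact absurd hh hmn

end FlatProof


/-- For Hausdorff flat structures `B₁, B₂` the following are equivalent:
(1) `B₁ ≡_{∞,ω} B₂`; (2) `B₁ ≅ B₂`; (3) there is a unique `L♭`-isomorphism `B₁ → B₂`. -/
theorem stmt13 {L : FirstOrder.Language} (B₁ B₂ : FlatStructure L)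
    (h₁ : B₁.IsHausdorff) (h₂ : B₂.IsHausdorff) :
    (BFEquiv (flatLang L) B₁.carrier B₂.carrier ↔
      Nonempty (B₁.carrier ≃[flatLang L] B₂.carrier)) ∧
    (Nonempty (B₁.carrier ≃[flatLang L] B₂.carrier) ↔
      ∃! _e : B₁.carrier ≃[flatLang L] B₂.carrier, True) := by
  constructor
  · constructor
    · exact fun h => FlatProof.bf_to_iso h₁ h₂ h
    · rintro ⟨e⟩
      exact ⟨_, FlatProof.iso_bfsys e⟩
  · constructor
    · rintro ⟨e⟩
      refine ⟨e, trivial, ?_⟩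
      rintro e' -
      apply FirstOrder.Language.Equiv.ext
      rintro ⟨n, a⟩
      obtain ⟨b', hb', hs'⟩ := FlatProof.iso_flat e' a
      obtain ⟨b, hb, hs⟩ := FlatProof.iso_flat e a
      rw [hb, hb']
      exact congrArg (fun y => (⟨n, y⟩ : B₂.carrier))
        (h₂ n b' b fun φ => (hs' φ).symm.trans (hs φ))
    · rintro ⟨e, -⟩
      exact ⟨e⟩
end

section
/- A closed subset H of S_∞ is a subgroup if and only if its code F(H) = {(ā,b̄) : some σ ∈ H maps ā to b̄} is a sharp back-and-forth system on (ω,=), i.e., F(H) ∩ (ω^n × ω^n) is an equivalence relation for each n (in addition to being a downward closed back-and-forth system). -/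
open Function

/-- The topology of pointwise convergence on `S_∞ = Sym(ω)` (with `ℕ` discrete), whose basic
open sets are the `U_{ā,b̄} = {σ : σ(ā) = b̄}`. -/
def permTop : TopologicalSpace (Equiv.Perm ℕ) :=
  TopologicalSpace.induced (fun σ : Equiv.Perm ℕ => (σ : ℕ → ℕ)) inferInstance

/-- The code `F(C)` of a set `C ⊆ S_∞`: all pairs `(ā,b̄) ∈ I = ⋃_n ω^n × ω^n` such that
`C ∩ U_{ā,b̄} ≠ ∅`. -/
def permCode (C : Set (Equiv.Perm ℕ)) : ∀ n : ℕ, Set ((Fin n → ℕ) × (Fin n → ℕ)) :=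
  fun _ => {p | ∃ σ ∈ C, ∀ i, σ (p.1 i) = p.2 i}

/-- The inverse operation: `C_F = {σ ∈ S_∞ : graph(σ) ⊆ F}`. -/
def permOfCode (F : ∀ n : ℕ, Set ((Fin n → ℕ) × (Fin n → ℕ))) : Set (Equiv.Perm ℕ) :=
  {σ | ∀ (n : ℕ) (a : Fin n → ℕ), (a, fun i => σ (a i)) ∈ F n}

/-- A back-and-forth system on the structure `(ω,=)`: a nonempty set of pairs of equal-length
tuples preserving equality patterns (i.e. atomic formulas of `(ω,=)`), with the two-sided
one-step extension property. -/
def IsBFSystemE (F : ∀ n : ℕ, Set ((Fin n → ℕ) × (Fin n → ℕ))) : Prop :=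
  (∃ n p, p ∈ F n) ∧
  (∀ n, ∀ p ∈ F n, ∀ i j : Fin n, p.1 i = p.1 j ↔ p.2 i = p.2 j) ∧
  (∀ n, ∀ p ∈ F n, ∀ c : ℕ, ∃ d : ℕ, (Fin.snoc p.1 c, Fin.snoc p.2 d) ∈ F (n + 1)) ∧
  (∀ n, ∀ p ∈ F n, ∀ d : ℕ, ∃ c : ℕ, (Fin.snoc p.1 c, Fin.snoc p.2 d) ∈ F (n + 1))

/-- Closure under injective subsequence maps. -/
def DownwardClosedE (F : ∀ n : ℕ, Set ((Fin n → ℕ) × (Fin n → ℕ))) : Prop :=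
  ∀ (k n : ℕ) (f : Fin k → Fin n), Function.Injective f →
    ∀ p ∈ F n, (p.1 ∘ f, p.2 ∘ f) ∈ F k

lemma mem_of_approx (H : Set (Equiv.Perm ℕ)) (hH : @IsClosed _ permTop H) (σ : Equiv.Perm ℕ)
    (h : ∀ n : ℕ, ∃ ρ ∈ H, ∀ k : Fin n, ρ (k : ℕ) = σ (k : ℕ)) : σ ∈ H := by
  have hcl : (fun ρ : Equiv.Perm ℕ => (ρ : ℕ → ℕ)) σ ∈
      closure ((fun ρ : Equiv.Perm ℕ => (ρ : ℕ → ℕ)) '' H) := by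
    rw [mem_closure_iff]
    intro O hO hmem
    obtain ⟨I, u, hu, hsub⟩ := isOpen_pi_iff.mp hO _ hmem
    obtain ⟨ρ, hρ, hag⟩ := h (I.sup id + 1)
    refine ⟨ρ, hsub ?_, ⟨ρ, hρ, rfl⟩⟩
    intro i hi
    have h1 : ρ i = σ i := by
      simpa using hag ⟨i, Nat.lt_succ_of_le (Finset.le_sup (f := id) hi)⟩
    rw [h1]; exact (hu i hi).2
  have hcl2 : σ ∈ @closure _ permTop H := closure_induced.mpr hcl
  have heq : @closure _ permTop H = H := @IsClosed.closure_eq _ permTop H hH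
  rwa [heq] at hcl2

/-- A closed subset `H ⊆ S_∞` is a subgroup iff its code `F(H)` is a sharp back-and-forth
system on `(ω,=)`: a downward closed back-and-forth system whose level-`n` part is an
equivalence relation on `ω^n` for every `n`. -/
theorem stmt15 (H : Set (Equiv.Perm ℕ)) (hH : @IsClosed _ permTop H) :
    (∃ G : Subgroup (Equiv.Perm ℕ), (G : Set (Equiv.Perm ℕ)) = H) ↔
      (IsBFSystemE (permCode H) ∧ DownwardClosedE (permCode H) ∧
        ∀ n : ℕ, Equivalence (fun a b : Fin n → ℕ => (a, b) ∈ permCode H n)) := by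
  constructor
  · rintro ⟨G, rfl⟩
    refine ⟨⟨⟨0, ((fun i => 0), (fun i => 0)), ⟨1, G.one_mem, fun i => i.elim0⟩⟩, ?_, ?_, ?_⟩, ?_, ?_⟩
    · rintro n ⟨a, b⟩ ⟨σ, hσ, hab⟩ i j
      simp only at hab ⊢
      rw [← hab i, ← hab j, σ.injective.eq_iff]
    · rintro n ⟨a, b⟩ ⟨σ, hσ, hab⟩ c
      refine ⟨σ c, σ, hσ, fun i => ?_⟩
      refine Fin.lastCases ?_ (fun j => ?_) i
      · simp
      · simp [hab j]
    · rintro n ⟨a, b⟩ ⟨σ, hσ, hab⟩ d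
      refine ⟨σ⁻¹ d, σ, hσ, fun i => ?_⟩
      refine Fin.lastCases ?_ (fun j => ?_) i
      · simp
      · simp [hab j]
    · rintro k n f hf ⟨a, b⟩ ⟨σ, hσ, hab⟩
      exact ⟨σ, hσ, fun i => hab (f i)⟩
    · intro n
      refine ⟨fun a => ⟨1, G.one_mem, fun i => rfl⟩, ?_, ?_⟩
      · rintro a b ⟨σ, hσ, hab⟩
        exact ⟨σ⁻¹, G.inv_mem hσ, fun i => σ.injective (by simp [hab i])⟩
      · rintro a b c ⟨σ, hσ, hab⟩ ⟨τ, hτ, hbc⟩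
        exact ⟨τ * σ, G.mul_mem hτ hσ, fun i => by
          simp only [Equiv.Perm.mul_apply]
          have h1 := hab i; have h2 := hbc i
          simp only at h1 h2 ⊢
          rw [h1, h2]⟩
  · rintro ⟨-, -, heq⟩
    have h1 : (1 : Equiv.Perm ℕ) ∈ H := by
      refine mem_of_approx H hH 1 fun n => ?_
      obtain ⟨σ, hσ, hid⟩ := (heq n).refl (fun k => (k : ℕ))
      exact ⟨σ, hσ, fun k => hid k⟩
    have hinv : ∀ σ ∈ H, σ⁻¹ ∈ H := by
      intro σ hσ
      refine mem_of_approx H hH σ⁻¹ fun n => ?_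
      have hm : ((fun k : Fin n => σ⁻¹ (k : ℕ)), (fun k : Fin n => (k : ℕ))) ∈ permCode H n :=
        ⟨σ, hσ, fun k => by simp⟩
      obtain ⟨ρ, hρ, hag⟩ := (heq n).symm hm
      exact ⟨ρ, hρ, fun k => hag k⟩
    have hmul : ∀ σ ∈ H, ∀ τ ∈ H, σ * τ ∈ H := by
      intro σ hσ τ hτ
      refine mem_of_approx H hH (σ * τ) fun n => ?_
      have hm1 : ((fun k : Fin n => (k : ℕ)), (fun k : Fin n => τ (k : ℕ))) ∈ permCode H n :=
        ⟨τ, hτ, fun k => rfl⟩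
      have hm2 : ((fun k : Fin n => τ (k : ℕ)), (fun k : Fin n => σ (τ (k : ℕ)))) ∈ permCode H n :=
        ⟨σ, hσ, fun k => rfl⟩
      obtain ⟨ρ, hρ, hag⟩ := (heq n).trans hm1 hm2
      exact ⟨ρ, hρ, fun k => hag k⟩
    exact ⟨{ carrier := H, one_mem' := h1, inv_mem' := fun h => hinv _ h,
             mul_mem' := fun ha hb => hmul _ ha _ hb }, rfl⟩
end

section
/- Let (T,⊴) be a padded ω-tree. Then for all a, b ∈ T: a ⊴ b if and only if every automorphism of (T,⊴) that fixes b also fixes a. -/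
/-- `T` is an (ω-)tree of finite sequences: nonempty and closed under initial segments. -/
def IsSubtree (T : Set (List ℕ)) : Prop :=
  [] ∈ T ∧ ∀ s ∈ T, ∀ t : List ℕ, t <+: s → t ∈ T

/-- The subtrees `T_{≥b₁}` and `T_{≥b₂}` are isomorphic (as trees under the prefix order). -/
def SubtreeIso (T : Set (List ℕ)) (b₁ b₂ : List ℕ) : Prop :=
  ∃ g : { c : List ℕ // c ∈ T ∧ b₁ <+: c } ≃ { c : List ℕ // c ∈ T ∧ b₂ <+: c },
    ∀ x y, x.1 <+: y.1 ↔ (g x).1 <+: (g y).1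

/-- A padded ω-tree: for every `a ∈ T` and every immediate successor `a ++ [n]` of `a`,
there are infinitely many immediate successors `a ++ [m]` of `a` with
`T_{≥ a ++ [m]} ≅ T_{≥ a ++ [n]}`. -/
def IsPadded (T : Set (List ℕ)) : Prop :=
  IsSubtree T ∧ ∀ a ∈ T, ∀ n : ℕ, (a ++ [n]) ∈ T →
    {m : ℕ | (a ++ [m]) ∈ T ∧ SubtreeIso T (a ++ [m]) (a ++ [n])}.Infinite

/-- Two prefixes of the same list with equal lengths are equal. -/
lemma prefix_eq_of_length {l₁ l₂ l₃ : List ℕ} (h1 : l₁ <+: l₃) (h2 : l₂ <+: l₃)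
    (h : l₁.length = l₂.length) : l₁ = l₂ :=
  (List.prefix_of_prefix_length_le h1 h2 h.le).eq_of_length h

/-- Disjointness of subtrees above distinct siblings. -/
lemma sibling_disj {c z : List ℕ} {n m : ℕ} (hnm : n ≠ m)
    (h1 : c ++ [n] <+: z) (h2 : c ++ [m] <+: z) : False := by
  have := prefix_eq_of_length h1 h2 (by simp)
  simp only [List.append_cancel_left_eq, List.cons.injEq] at this
  exact hnm this.1

/-- If `c ++ [k] <+: y` and `¬ c ++ [k] <+: x`, then `x <+: y ↔ x <+: c`. -/
lemma pref_outside {c x y : List ℕ} {k : ℕ} (hy : c ++ [k] <+: y)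
    (hx : ¬ c ++ [k] <+: x) : x <+: y ↔ x <+: c := by
  constructor
  · intro hxy
    rcases List.prefix_or_prefix_of_prefix hxy hy with h | h
    · rcases Nat.lt_or_ge x.length (c ++ [k]).length with hl | hl
      · refine List.prefix_of_prefix_length_le h (List.prefix_append c [k]) ?_
        simp only [List.length_append, List.length_singleton] at hl
        omega
      · exfalso
        apply hx
        rw [h.eq_of_length (le_antisymm h.length_le hl)]
    · exact absurd h hx
  · intro hxc
    exact hxc.trans ((List.prefix_append c [k]).trans hy)

/-- Order-preserving bijections of a subtree do not decrease length. -/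
lemma length_le_of_orderIso (T : Set (List ℕ)) (hT : IsSubtree T)
    (σ : { x : List ℕ // x ∈ T } ≃ { x : List ℕ // x ∈ T })
    (hσ : ∀ x y, x.1 <+: y.1 ↔ (σ x).1 <+: (σ y).1)
    (x : { x : List ℕ // x ∈ T }) : x.1.length ≤ (σ x).1.length := by
  have hmem : ∀ k : ℕ, x.1.take k ∈ T := fun k => hT.2 x.1 x.2 _ (List.take_prefix _ _)
  set f : Fin (x.1.length + 1) → { x : List ℕ // x ∈ T } :=
    fun k => σ ⟨x.1.take k.1, hmem k.1⟩ with hf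
  have hpre : ∀ k, (f k).1 <+: (σ x).1 := fun k =>
    (hσ ⟨x.1.take k.1, hmem k.1⟩ x).mp (List.take_prefix _ _)
  have hinj : Function.Injective fun k : Fin (x.1.length + 1) =>
      (⟨(f k).1.length, Nat.lt_succ_of_le (hpre k).length_le⟩ :
        Fin ((σ x).1.length + 1)) := by
    intro k k' h
    simp only [Fin.mk.injEq] at h
    have heq : (f k).1 = (f k').1 := prefix_eq_of_length (hpre k) (hpre k') h
    have htake : x.1.take k.1 = x.1.take k'.1 := by
      have := σ.injective (Subtype.ext heq)
      exact congrArg Subtype.val this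
    have h1 : (x.1.take k.1).length = k.1 := by
      simp [Nat.lt_succ_iff.mp k.2]
    have h2 : (x.1.take k'.1).length = k'.1 := by
      simp [Nat.lt_succ_iff.mp k'.2]
    exact Fin.ext (by rw [← h1, ← h2, htake])
  have := Fintype.card_le_of_injective _ hinj
  simpa using this

/-- In a padded ω-tree, `a ⊴ b` iff every automorphism of `(T,⊴)` fixing `b` fixes `a`. -/
theorem stmt17 (T : Set (List ℕ)) (hT : IsPadded T) (a b : List ℕ)
    (ha : a ∈ T) (hb : b ∈ T) :
    a <+: b ↔ ∀ σ : { x : List ℕ // x ∈ T } ≃ { x : List ℕ // x ∈ T },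
      (∀ x y : { x : List ℕ // x ∈ T }, x.1 <+: y.1 ↔ (σ x).1 <+: (σ y).1) →
      σ ⟨b, hb⟩ = ⟨b, hb⟩ → σ ⟨a, ha⟩ = ⟨a, ha⟩ := by
  constructor
  · -- forward direction: via length preservation
    intro hab σ hσ hσb
    have hσ' : ∀ x y, x.1 <+: y.1 ↔ (σ.symm x).1 <+: (σ.symm y).1 := by
      intro x y
      rw [hσ (σ.symm x) (σ.symm y)]
      simp
    have hlen : (σ ⟨a, ha⟩).1.length = a.length := by
      have h1 := length_le_of_orderIso T hT.1 σ hσ ⟨a, ha⟩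
      have h2 := length_le_of_orderIso T hT.1 σ.symm hσ' (σ ⟨a, ha⟩)
      simp only [Equiv.symm_apply_apply] at h2
      exact le_antisymm h2 h1
    have hσab : (σ ⟨a, ha⟩).1 <+: b := by
      have := (hσ ⟨a, ha⟩ ⟨b, hb⟩).mp hab
      rwa [hσb] at this
    exact Subtype.ext (prefix_eq_of_length hσab hab hlen)
  · -- backward direction: contrapositive, construct an automorphism
    intro H
    by_contra hab
    have hP : ∃ k, ¬ a.take k <+: b := ⟨a.length, by simpa using hab⟩
    set k := Nat.find hP with hkdef
    have hk : ¬ a.take k <+: b := Nat.find_spec hP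
    have hk0 : k ≠ 0 := by
      intro h
      exact hk (by simp [h])
    have hklt : k - 1 < k := Nat.sub_lt (Nat.pos_of_ne_zero hk0) one_pos
    have h1 : a.take (k - 1) <+: b := not_not.mp (Nat.find_min hP hklt)
    have hkle : k - 1 < a.length := by
      by_contra h
      push_neg at h
      exact hab (by rwa [List.take_of_length_le h] at h1)
    set c := a.take (k - 1) with hcdef
    set n := a[k - 1]'hkle with hndef
    have htk : a.take k = c ++ [n] := by
      conv_lhs => rw [show k = (k - 1) + 1 from (Nat.succ_pred_eq_of_ne_zero hk0).symm]
      rw [List.take_succ]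
      simp [hcdef, hndef, List.getElem?_eq_getElem hkle]
    have hpb : ¬ c ++ [n] <+: b := htk ▸ hk
    have hpa : c ++ [n] <+: a := htk ▸ List.take_prefix k a
    have hcT : c ∈ T := hT.1.2 a ha c (List.take_prefix _ _)
    have hpT : (c ++ [n]) ∈ T := hT.1.2 a ha _ hpa
    have hS := hT.2 c hcT n hpT
    have hBfin : ({m : ℕ | c ++ [m] <+: b} ∪ {n} : Set ℕ).Finite := by
      apply Set.Finite.union
      · apply Set.Subsingleton.finite
        intro m1 hm1 m2 hm2
        have := prefix_eq_of_length hm1 hm2 (by simp)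
        simp only [List.append_cancel_left_eq, List.cons.injEq] at this
        exact this.1
      · exact Set.finite_singleton n
    obtain ⟨m, hmS, hmB⟩ := (hS.diff hBfin).nonempty
    simp only [Set.mem_union, Set.mem_setOf_eq, Set.mem_singleton_iff, not_or] at hmB
    obtain ⟨hqb, hmn⟩ := hmB
    obtain ⟨hqT, g, hg⟩ := hmS
    -- g : { z // z ∈ T ∧ c ++ [m] <+: z } ≃ { z // z ∈ T ∧ c ++ [n] <+: z }
    have hdisj : ∀ z : List ℕ, c ++ [n] <+: z → c ++ [m] <+: z → False := fun z h1 h2 =>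
      sibling_disj (fun h => hmn h.symm) h1 h2
    -- the involution swapping the two subtrees
    set F : {x : List ℕ // x ∈ T} → {x : List ℕ // x ∈ T} := fun x =>
      if h : c ++ [n] <+: x.1 then ⟨(g.symm ⟨x.1, x.2, h⟩).1, (g.symm ⟨x.1, x.2, h⟩).2.1⟩
      else if h' : c ++ [m] <+: x.1 then ⟨(g ⟨x.1, x.2, h'⟩).1, (g ⟨x.1, x.2, h'⟩).2.1⟩
      else x with hFdef
    have hFP : ∀ (x : {x : List ℕ // x ∈ T}) (h : c ++ [n] <+: x.1),
        F x = ⟨(g.symm ⟨x.1, x.2, h⟩).1, (g.symm ⟨x.1, x.2, h⟩).2.1⟩ := by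
      intro x h
      simp only [hFdef, dif_pos h]
    have hFQ : ∀ (x : {x : List ℕ // x ∈ T}) (h' : c ++ [m] <+: x.1),
        F x = ⟨(g ⟨x.1, x.2, h'⟩).1, (g ⟨x.1, x.2, h'⟩).2.1⟩ := by
      intro x h'
      have hnp : ¬ c ++ [n] <+: x.1 := fun h => hdisj x.1 h h'
      simp only [hFdef, dif_neg hnp, dif_pos h']
    have hFO : ∀ (x : {x : List ℕ // x ∈ T}),
        ¬ c ++ [n] <+: x.1 → ¬ c ++ [m] <+: x.1 → F x = x := by
      intro x h h'
      simp only [hFdef, dif_neg h, dif_neg h']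
    have hQF : ∀ (x : {x : List ℕ // x ∈ T}) (h : c ++ [n] <+: x.1),
        c ++ [m] <+: (F x).1 := by
      intro x h
      rw [hFP x h]
      exact (g.symm ⟨x.1, x.2, h⟩).2.2
    have hPF : ∀ (x : {x : List ℕ // x ∈ T}) (h' : c ++ [m] <+: x.1),
        c ++ [n] <+: (F x).1 := by
      intro x h'
      rw [hFQ x h']
      exact (g ⟨x.1, x.2, h'⟩).2.2
    have hinv : Function.Involutive F := by
      intro x
      by_cases h : c ++ [n] <+: x.1
      · have h2 : c ++ [m] <+: (F x).1 := hQF x h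
        have hv : (F x).1 = (g.symm ⟨x.1, x.2, h⟩).1 := by rw [hFP x h]
        have hkey : (⟨(F x).1, (F x).2, h2⟩ : {z : List ℕ // z ∈ T ∧ c ++ [m] <+: z}) =
            g.symm ⟨x.1, x.2, h⟩ := Subtype.ext hv
        have h4 := congrArg g hkey
        rw [Equiv.apply_symm_apply] at h4
        have hv4 := congrArg Subtype.val h4
        rw [hFQ (F x) h2]
        exact Subtype.ext hv4
      · by_cases h' : c ++ [m] <+: x.1
        · have h2 : c ++ [n] <+: (F x).1 := hPF x h'
          have hv : (F x).1 = (g ⟨x.1, x.2, h'⟩).1 := by rw [hFQ x h']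
          have hkey : (⟨(F x).1, (F x).2, h2⟩ : {z : List ℕ // z ∈ T ∧ c ++ [n] <+: z}) =
              g ⟨x.1, x.2, h'⟩ := Subtype.ext hv
          have h4 := congrArg g.symm hkey
          rw [Equiv.symm_apply_apply] at h4
          have hv4 := congrArg Subtype.val h4
          rw [hFP (F x) h2]
          exact Subtype.ext hv4
        · rw [hFO x h h', hFO x h h']
    set σ : { x : List ℕ // x ∈ T } ≃ { x : List ℕ // x ∈ T } := hinv.toPerm F with hσdef
    have hσapp : ∀ x, σ x = F x := fun x => rfl
    -- order preservation
    have hgsymm : ∀ (u v : {z : List ℕ // z ∈ T ∧ c ++ [n] <+: z}),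
        (g.symm u).1 <+: (g.symm v).1 ↔ u.1 <+: v.1 := by
      intro u v
      rw [hg (g.symm u) (g.symm v)]
      simp
    have hord : ∀ x y : { x : List ℕ // x ∈ T },
        x.1 <+: y.1 ↔ (σ x).1 <+: (σ y).1 := by
      intro x y
      rw [hσapp, hσapp]
      by_cases hx : c ++ [n] <+: x.1
      · by_cases hy : c ++ [n] <+: y.1
        · rw [hFP x hx, hFP y hy]
          exact (hgsymm ⟨x.1, x.2, hx⟩ ⟨y.1, y.2, hy⟩).symm
        · by_cases hy' : c ++ [m] <+: y.1
          · constructor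
            · intro hxy
              exact absurd (hx.trans hxy) (fun h => hdisj _ h hy')
            · intro hxy
              exact absurd ((hQF x hx).trans hxy) (fun h => hdisj _ (hPF y hy') h)
          · constructor
            · intro hxy
              exact absurd (hx.trans hxy) hy
            · intro hxy
              rw [hFO y hy hy'] at hxy
              exact absurd ((hQF x hx).trans hxy) hy'
      · by_cases hx' : c ++ [m] <+: x.1
        · by_cases hy : c ++ [n] <+: y.1
          · constructor
            · intro hxy
              exact absurd (hx'.trans hxy) (fun h => hdisj _ hy h)
            · intro hxy
              exact absurd ((hPF x hx').trans hxy) (fun h => hdisj _ h (hQF y hy))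
          · by_cases hy' : c ++ [m] <+: y.1
            · rw [hFQ x hx', hFQ y hy']
              exact hg ⟨x.1, x.2, hx'⟩ ⟨y.1, y.2, hy'⟩
            · constructor
              · intro hxy
                exact absurd (hx'.trans hxy) hy'
              · intro hxy
                rw [hFO y hy hy'] at hxy
                exact absurd ((hPF x hx').trans hxy) hy
        · rw [hFO x hx hx']
          by_cases hy : c ++ [n] <+: y.1
          · rw [pref_outside hy hx, pref_outside (hQF y hy) hx']
          · by_cases hy' : c ++ [m] <+: y.1
            · rw [pref_outside hy' hx', pref_outside (hPF y hy') hx]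
            · rw [hFO y hy hy']
    -- σ fixes b
    have hσb : σ ⟨b, hb⟩ = ⟨b, hb⟩ := by
      rw [hσapp]
      exact hFO ⟨b, hb⟩ hpb hqb
    have hfix := H σ hord hσb
    -- but σ moves a
    have hqa : c ++ [m] <+: (σ ⟨a, ha⟩).1 := by
      rw [hσapp]
      exact hQF ⟨a, ha⟩ hpa
    rw [hfix] at hqa
    exact hdisj a hpa hqa
end

section
/- S_∞ divides Aut(ℚ,≤): there is a closed subgroup G' of Aut(ℚ,≤) and a continuous surjective group homomorphism from G' onto S_∞. -/
noncomputable def col (q : ℚ) : ℕ := q.den.factorization 2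

theorem col_dense (n : ℕ) (x y : ℚ) (hxy : x < y) :
    ∃ q : ℚ, x < q ∧ q < y ∧ col q = n := by
  obtain ⟨t, ht⟩ : ∃ t : ℕ, (13 : ℚ) / (2 ^ n * (y - x)) < 3 ^ t :=
    pow_unbounded_of_one_lt _ (by norm_num)
  have hyx : (0:ℚ) < y - x := sub_pos.2 hxy
  have h13 : (13 : ℚ) < 2 ^ n * 3 ^ t * (y - x) := by
    rw [div_lt_iff₀ (mul_pos (by positivity) hyx)] at ht
    calc (13 : ℚ) < 3 ^ t * (2 ^ n * (y - x)) := ht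
    _ = 2 ^ n * 3 ^ t * (y - x) := by ring
  set D : ℤ := 2 ^ n * 3 ^ t with hDdef
  have hDQ : ((D : ℚ)) = 2 ^ n * 3 ^ t := by rw [hDdef]; push_cast; ring
  have hDpos : (0 : ℤ) < D := by positivity
  set k : ℤ := 6 * (⌊x * D / 6⌋ + 1) + 1 with hk
  have hkQ : (k : ℚ) = 6 * ((⌊x * D / 6⌋ : ℚ) + 1) + 1 := by rw [hk]; push_cast; ring
  have hxk : x * D < (k : ℚ) := by
    have h1 : x * D / 6 < (⌊x * D / 6⌋ : ℚ) + 1 := Int.lt_floor_add_one _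
    rw [hkQ]; linarith
  have hky : (k : ℚ) < y * D := by
    have h1 : (⌊x * D / 6⌋ : ℚ) ≤ x * D / 6 := Int.floor_le _
    have h2 : x * D + 13 < y * D := by rw [hDQ]; nlinarith
    rw [hkQ]; linarith
  refine ⟨(k : ℚ) / (D : ℚ), ?_, ?_, ?_⟩
  · rw [lt_div_iff₀ (by exact_mod_cast hDpos)]; exact hxk
  · rw [div_lt_iff₀ (by exact_mod_cast hDpos)]; exact hky
  · have h2k : ¬ (2 : ℤ) ∣ k := by omega
    have h3k : ¬ (3 : ℤ) ∣ k := by omega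
    have hcop : Nat.Coprime k.natAbs D.natAbs := by
      have hD : D.natAbs = 2 ^ n * 3 ^ t := by
        rw [hDdef, Int.natAbs_mul, Int.natAbs_pow, Int.natAbs_pow]; rfl
      rw [hD]
      refine Nat.Coprime.mul_right (Nat.Coprime.pow_right _ ?_) (Nat.Coprime.pow_right _ ?_)
      · exact Nat.coprime_comm.mp ((Nat.prime_two.coprime_iff_not_dvd).mpr
          (fun h => h2k (Int.natAbs_dvd_natAbs.mp (by simpa using h))))
      · exact Nat.coprime_comm.mp ((Nat.prime_three.coprime_iff_not_dvd).mpr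
          (fun h => h3k (Int.natAbs_dvd_natAbs.mp (by simpa using h))))
    have hden := Rat.den_div_eq_of_coprime hDpos hcop
    have hden' : ((k : ℚ) / (D : ℚ)).den = 2 ^ n * 3 ^ t := by
      have : (((k : ℚ) / (D : ℚ)).den : ℤ) = ((2 ^ n * 3 ^ t : ℕ) : ℤ) := by
        rw [hden, hDdef]; push_cast; ring
      exact_mod_cast this
    unfold col
    rw [hden', Nat.factorization_mul (by positivity) (by positivity),
      Nat.Prime.factorization_pow Nat.prime_two, Nat.Prime.factorization_pow Nat.prime_three]
    simp

/-- Find a rational of a given color above all of `L` and below all of `U`. -/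
theorem col_between (n : ℕ) (L U : Finset ℚ) (h : ∀ l ∈ L, ∀ u ∈ U, l < u) :
    ∃ r : ℚ, col r = n ∧ (∀ l ∈ L, l < r) ∧ (∀ u ∈ U, r < u) := by
  rcases L.eq_empty_or_nonempty with hL | hL
  · rcases U.eq_empty_or_nonempty with hU | hU
    · obtain ⟨r, _, _, hr⟩ := col_dense n 0 1 (by norm_num)
      exact ⟨r, hr, by simp [hL], by simp [hU]⟩
    · obtain ⟨r, hr1, hr2, hr3⟩ := col_dense n (U.min' hU - 1) (U.min' hU) (by linarith)
      exact ⟨r, hr3, by simp [hL], fun u hu => lt_of_lt_of_le hr2 (U.min'_le u hu)⟩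
  · rcases U.eq_empty_or_nonempty with hU | hU
    · obtain ⟨r, hr1, hr2, hr3⟩ := col_dense n (L.max' hL) (L.max' hL + 1) (by linarith)
      exact ⟨r, hr3, fun l hl => lt_of_le_of_lt (L.le_max' l hl) hr1, by simp [hU]⟩
    · have hlt : L.max' hL < U.min' hU := h _ (L.max'_mem hL) _ (U.min'_mem hU)
      obtain ⟨r, hr1, hr2, hr3⟩ := col_dense n (L.max' hL) (U.min' hU) hlt
      exact ⟨r, hr3, fun l hl => lt_of_le_of_lt (L.le_max' l hl) hr1,
        fun u hu => lt_of_lt_of_le hr2 (U.min'_le u hu)⟩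

/-- A finite partial isomorphism compatible with `π` on colors. -/
def Good (π : Equiv.Perm ℕ) (s : Finset (ℚ × ℚ)) : Prop :=
  (∀ p ∈ s, ∀ p' ∈ s, (p.1 < p'.1 ↔ p.2 < p'.2)) ∧ (∀ p ∈ s, col p.2 = π (col p.1))

theorem good_empty (π : Equiv.Perm ℕ) : Good π ∅ := by simp [Good]

theorem extend_dom {π : Equiv.Perm ℕ} {s : Finset (ℚ × ℚ)} (hs : Good π s) (q : ℚ) :
    ∃ r : ℚ, Good π (insert (q, r) s) := by
  by_cases hq : ∃ p ∈ s, p.1 = q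
  · obtain ⟨p, hp, hpq⟩ := hq
    refine ⟨p.2, ?_⟩
    have : (q, p.2) = p := by rw [← hpq]
    rw [this, Finset.insert_eq_self.mpr hp]
    exact hs
  · push_neg at hq
    set L := (s.filter (fun p => p.1 < q)).image Prod.snd with hLdef
    set U := (s.filter (fun p => q < p.1)).image Prod.snd with hUdef
    have hLU : ∀ l ∈ L, ∀ u ∈ U, l < u := by
      rw [hLdef, hUdef]
      intro l hl u hu
      simp only [Finset.mem_image, Finset.mem_filter] at hl hu
      obtain ⟨p, ⟨hp, hp1⟩, rfl⟩ := hl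
      obtain ⟨p', ⟨hp', hp'1⟩, rfl⟩ := hu
      exact (hs.1 p hp p' hp').mp (hp1.trans hp'1)
    obtain ⟨r, hrc, hrL, hrU⟩ := col_between (π (col q)) L U hLU
    rw [hLdef] at hrL
    rw [hUdef] at hrU
    have key : ∀ p ∈ s, (q < p.1 ↔ r < p.2) := by
      intro p hp
      constructor
      · intro h
        exact hrU p.2 (Finset.mem_image_of_mem _ (Finset.mem_filter.mpr ⟨hp, h⟩))
      · intro h
        rcases lt_trichotomy q p.1 with h' | h' | h'
        · exact h'
        · exact absurd h' (fun h'' => hq p hp h''.symm)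
        · exact absurd h (not_lt_of_gt
            (hrL p.2 (Finset.mem_image_of_mem _ (Finset.mem_filter.mpr ⟨hp, h'⟩))))
    have key' : ∀ p ∈ s, (p.1 < q ↔ p.2 < r) := by
      intro p hp
      constructor
      · intro h
        exact hrL p.2 (Finset.mem_image_of_mem _ (Finset.mem_filter.mpr ⟨hp, h⟩))
      · intro h
        rcases lt_trichotomy p.1 q with h' | h' | h'
        · exact h'
        · exact absurd h' (hq p hp)
        · exact absurd h (not_lt_of_gt
            (hrU p.2 (Finset.mem_image_of_mem _ (Finset.mem_filter.mpr ⟨hp, h'⟩))))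
    refine ⟨r, ?_, ?_⟩
    · intro p hp p' hp'
      rcases Finset.mem_insert.mp hp with rfl | hp <;>
        rcases Finset.mem_insert.mp hp' with h' | hp'
      · rw [h']; exact Iff.rfl.trans (by simp)
      · exact key p' hp'
      · rw [h']; exact key' p hp
      · exact hs.1 p hp p' hp'
    · intro p hp
      rcases Finset.mem_insert.mp hp with rfl | hp
      · exact hrc
      · exact hs.2 p hp

theorem good_flip {π : Equiv.Perm ℕ} {s : Finset (ℚ × ℚ)} (hs : Good π s) :
    Good π.symm (s.image Prod.swap) := by
  constructor
  · intro p hp p' hp'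
    simp only [Finset.mem_image] at hp hp'
    obtain ⟨a, ha, rfl⟩ := hp
    obtain ⟨b, hb, rfl⟩ := hp'
    exact (hs.1 a ha b hb).symm
  · intro p hp
    simp only [Finset.mem_image] at hp
    obtain ⟨a, ha, rfl⟩ := hp
    simp only [Prod.fst_swap, Prod.snd_swap]
    rw [hs.2 a ha]
    exact (π.symm_apply_apply _).symm

theorem extend_ran {π : Equiv.Perm ℕ} {s : Finset (ℚ × ℚ)} (hs : Good π s) (r : ℚ) :
    ∃ q : ℚ, Good π (insert (q, r) s) := by
  obtain ⟨q, hq⟩ := extend_dom (good_flip hs) r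
  refine ⟨q, ?_⟩
  have h2 := good_flip hq
  rw [Finset.image_insert, Finset.image_image] at h2
  simp only [Prod.swap_swap_eq, Finset.image_id, Prod.swap_prod_mk, Equiv.symm_symm] at h2
  exact h2

theorem step {π : Equiv.Perm ℕ} {s : Finset (ℚ × ℚ)} (hs : Good π s) (q r : ℚ) :
    ∃ s' : Finset (ℚ × ℚ), Good π s' ∧ s ⊆ s' ∧ (∃ y, (q, y) ∈ s') ∧ (∃ x, (x, r) ∈ s') := by
  obtain ⟨y, h1⟩ := extend_dom hs q
  obtain ⟨x, h2⟩ := extend_ran h1 r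
  exact ⟨insert (x, r) (insert (q, y) s), h2,
    (Finset.subset_insert _ _).trans (Finset.subset_insert _ _),
    ⟨y, Finset.mem_insert_of_mem (Finset.mem_insert_self _ _)⟩,
    ⟨x, Finset.mem_insert_self _ _⟩⟩

theorem exists_lift (π : Equiv.Perm ℕ) :
    ∃ σ : ℚ ≃o ℚ, ∀ q, col (σ q) = π (col q) := by
  classical
  set E : ℚ ≃ ℕ := Denumerable.eqv ℚ with hE
  let F : ℕ → {s : Finset (ℚ × ℚ) // Good π s} := fun n =>
    Nat.rec ⟨∅, good_empty π⟩
      (fun n ih => ⟨(step ih.2 (E.symm n) (E.symm n)).choose,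
        (step ih.2 (E.symm n) (E.symm n)).choose_spec.1⟩) n
  have hF : ∀ n : ℕ, (F n).1 ⊆ (F (n + 1)).1 ∧ (∃ y, (E.symm n, y) ∈ (F (n + 1)).1) ∧
      (∃ x, (x, E.symm n) ∈ (F (n + 1)).1) := by
    intro n
    have h := (step (F n).2 (E.symm n) (E.symm n)).choose_spec
    exact ⟨h.2.1, h.2.2.1, h.2.2.2⟩
  have hmono : ∀ m n : ℕ, m ≤ n → (F m).1 ⊆ (F n).1 := by
    intro m n hmn
    induction n with
    | zero => rw [Nat.le_zero.mp hmn]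
    | succ n ih =>
      rcases Nat.le_succ_iff.mp hmn with h | h
      · exact (ih h).trans (hF n).1
      · rw [h]
  have htotal : ∀ q : ℚ, ∃ r, ∃ n, (q, r) ∈ (F n).1 := by
    intro q
    obtain ⟨y, hy⟩ := (hF (E q)).2.1
    rw [E.symm_apply_apply] at hy
    exact ⟨y, E q + 1, hy⟩
  let f : ℚ → ℚ := fun q => (htotal q).choose
  have hfmem : ∀ q : ℚ, ∃ n, (q, f q) ∈ (F n).1 := fun q => (htotal q).choose_spec
  have hfun : ∀ (n : ℕ) (a b b' : ℚ), (a, b) ∈ (F n).1 → (a, b') ∈ (F n).1 → b = b' := by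
    intro n a b b' hm hn
    have h1 := (F n).2.1 (a, b) hm (a, b') hn
    have h2 := (F n).2.1 (a, b') hn (a, b) hm
    simp only [lt_self_iff_false, false_iff] at h1 h2
    exact le_antisymm (not_lt.mp h2) (not_lt.mp h1)
  have hsm : StrictMono f := by
    intro a b hab
    obtain ⟨m, hm⟩ := hfmem a
    obtain ⟨n, hn⟩ := hfmem b
    exact ((F (max m n)).2.1 (a, f a) (hmono m _ (le_max_left _ _) hm)
      (b, f b) (hmono n _ (le_max_right _ _) hn)).mp hab
  have hsurj : Function.Surjective f := by
    intro r
    obtain ⟨x, hx⟩ := (hF (E r)).2.2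
    rw [E.symm_apply_apply] at hx
    obtain ⟨m, hm⟩ := hfmem x
    exact ⟨x, hfun (max m (E r + 1)) x _ _ (hmono m _ (le_max_left _ _) hm)
      (hmono _ _ (le_max_right _ _) hx)⟩
  have hcol : ∀ q, col (f q) = π (col q) := by
    intro q
    obtain ⟨n, hn⟩ := hfmem q
    exact (F n).2.2 (q, f q) hn
  refine ⟨StrictMono.orderIsoOfSurjective f hsm hsurj, fun q => ?_⟩
  rw [show ((StrictMono.orderIsoOfSurjective f hsm hsurj : ℚ ≃o ℚ) q) = f q from
    congrFun (StrictMono.coe_orderIsoOfSurjective f hsm hsurj) q]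
  exact hcol q

noncomputable def sec (n : ℕ) : ℚ := (col_dense n 0 1 (by norm_num)).choose

theorem sec_spec (n : ℕ) : col (sec n) = n :=
  (col_dense n 0 1 (by norm_num)).choose_spec.2.2

/-- The topology of pointwise convergence on `Aut(ℚ,≤)` (with `ℚ` discrete). -/
def ordAutTop : TopologicalSpace (ℚ ≃o ℚ) :=
  TopologicalSpace.induced (fun σ : ℚ ≃o ℚ => (σ : ℚ → ℚ))
    (@Pi.topologicalSpace ℚ (fun _ => ℚ) (fun _ => ⊥))

/-- `S_∞` divides `Aut(ℚ,≤)`: there is a closed subgroup `G'` of `Aut(ℚ,≤)` and a continuous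
surjective group homomorphism from `G'` onto `S_∞`. -/
theorem stmt18 :
    ∃ G' : Set (ℚ ≃o ℚ),
      (OrderIso.refl ℚ ∈ G') ∧
      (∀ σ ∈ G', ∀ τ ∈ G', σ.trans τ ∈ G') ∧
      (∀ σ ∈ G', σ.symm ∈ G') ∧
      @IsClosed _ ordAutTop G' ∧
      ∃ h : { σ : ℚ ≃o ℚ // σ ∈ G' } → Equiv.Perm ℕ,
        Function.Surjective h ∧
        (∀ σ τ ρ : { σ : ℚ ≃o ℚ // σ ∈ G' }, ρ.1 = σ.1.trans τ.1 → h ρ = (h σ).trans (h τ)) ∧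
        @Continuous _ _ (TopologicalSpace.induced Subtype.val ordAutTop) permTop h := by
  classical
  set G' : Set (ℚ ≃o ℚ) :=
    {σ : ℚ ≃o ℚ | ∀ q q' : ℚ, col q = col q' ↔ col (σ q) = col (σ q')} with hG'
  have hsymm : ∀ σ ∈ G', σ.symm ∈ G' := by
    intro σ hσ q q'
    simpa using (hσ (σ.symm q) (σ.symm q')).symm
  -- the induced map on colors
  have key : ∀ σ ∈ G', ∀ q : ℚ, col (σ (sec (col q))) = col (σ q) :=
    fun σ hσ q => (hσ (sec (col q)) q).mp (sec_spec (col q))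
  refine ⟨G', ?_, ?_, hsymm, ?_, ?_⟩
  · intro q q'; simp
  · intro σ hσ τ hτ q q'
    exact (hσ q q').trans (hτ (σ q) (σ q'))
  · -- closedness
    letI : TopologicalSpace ℚ := ⊥
    haveI : DiscreteTopology ℚ := ⟨rfl⟩
    letI : TopologicalSpace (ℚ ≃o ℚ) := ordAutTop
    have hG'eq : G' = ⋂ (q : ℚ), ⋂ (q' : ℚ),
        (fun σ : ℚ ≃o ℚ => ((σ : ℚ → ℚ) q, (σ : ℚ → ℚ) q')) ⁻¹'
          {p : ℚ × ℚ | col q = col q' ↔ col p.1 = col p.2} := by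
      ext σ
      simp only [hG', Set.mem_setOf_eq, Set.mem_iInter, Set.mem_preimage]
    rw [hG'eq]
    refine isClosed_iInter fun q => isClosed_iInter fun q' => ?_
    refine IsClosed.preimage ?_ (isClosed_discrete _)
    exact Continuous.prodMk ((continuous_apply q).comp continuous_induced_dom)
      ((continuous_apply q').comp continuous_induced_dom)
  · -- the homomorphism
    set hf : (ℚ ≃o ℚ) → ℕ → ℕ := fun σ n => col (σ (sec n)) with hhf
    have key' : ∀ σ ∈ G', ∀ n : ℕ, ∀ q : ℚ, col q = n → hf σ n = col (σ q) := by
      intro σ hσ n q hq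
      subst hq
      exact key σ hσ q
    refine ⟨fun σ => ⟨hf σ.1, hf σ.1.symm, ?_, ?_⟩, ?_, ?_, ?_⟩
    · -- left inverse
      intro n
      simp only [hhf]
      have h1 : hf σ.1.symm (col (σ.1 (sec n))) = col (σ.1.symm (σ.1 (sec n))) :=
        key' σ.1.symm (hsymm σ.1 σ.2) _ _ rfl
      simp only [hhf] at h1
      rw [h1]
      simp [sec_spec]
    · -- right inverse
      intro n
      simp only [hhf]
      have h1 : hf σ.1 (col (σ.1.symm (sec n))) = col (σ.1 (σ.1.symm (sec n))) :=
        key' σ.1 σ.2 _ _ rfl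
      simp only [hhf] at h1
      rw [h1]
      simp [sec_spec]
    · -- surjectivity
      intro π
      obtain ⟨σ, hσcol⟩ := exists_lift π
      have hσ : σ ∈ G' := by
        intro q q'
        rw [hσcol, hσcol]
        exact (Equiv.apply_eq_iff_eq π).symm
      refine ⟨⟨σ, hσ⟩, ?_⟩
      ext n
      simp only [Equiv.coe_fn_mk, hhf]
      rw [hσcol, sec_spec]
    · -- multiplicativity
      intro σ τ ρ hρ
      ext n
      simp only [Equiv.coe_fn_mk, Equiv.trans_apply, hhf, hρ, OrderIso.trans_apply]
      exact (key' τ.1 τ.2 _ _ rfl).symm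
    · -- continuity
      letI : TopologicalSpace ℚ := ⊥
      haveI : DiscreteTopology ℚ := ⟨rfl⟩
      letI : TopologicalSpace (ℚ ≃o ℚ) := ordAutTop
      letI : TopologicalSpace {σ : ℚ ≃o ℚ // σ ∈ G'} :=
        TopologicalSpace.induced Subtype.val ordAutTop
      letI : TopologicalSpace (Equiv.Perm ℕ) := permTop
      rw [show permTop = TopologicalSpace.induced (fun σ : Equiv.Perm ℕ => (σ : ℕ → ℕ))
        inferInstance from rfl]
      refine continuous_induced_rng.mpr (continuous_pi fun n => ?_)
      show Continuous fun σ : {σ : ℚ ≃o ℚ // σ ∈ G'} => col (σ.1 (sec n))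
      have c0 : Continuous (Subtype.val : {σ : ℚ ≃o ℚ // σ ∈ G'} → ℚ ≃o ℚ) :=
        continuous_subtype_val
      have c1 : Continuous fun σ : ℚ ≃o ℚ => (σ : ℚ → ℚ) := continuous_induced_dom
      have c3 : Continuous fun σ : {σ : ℚ ≃o ℚ // σ ∈ G'} => (σ.1 : ℚ → ℚ) (sec n) :=
        (continuous_apply (sec n)).comp (c1.comp c0)
      have c4 : Continuous (col : ℚ → ℕ) := continuous_of_discreteTopology
      exact c4.comp c3
end
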